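/- arXiv:2605.22261 — 7 statements merged into one kernel-verified Lean document; each statement's English description precedes it below -/
import Mathlib

section
/- Let F be a finite field with q elements, and let K ≥ 3, 1 ≤ U ≤ K−1 and L, L_X, L_Y be natural numbers. For every two-round decentralized secure aggregation (DSA) scheme with input length L, first-round message length L_X and second-round message length L_Y that satisfies the correctness constraint (security is not needed), one has L_X ≥ L. Consequently the first-round rate satisfies R₁ = L_X/L ≥ 1 whenever L ≥ 1. -/
open MeasureTheory Finset
open scoped ENNReal

/-- Two (discrete) random tuples `f` and `g` are statistically independent:
the joint law of `(f, g)` is the product of the marginal laws, expressed pointwise. -/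
def IndepRV {Ω A B : Type*} [MeasurableSpace Ω] (P : Measure Ω)
    (f : Ω → A) (g : Ω → B) : Prop :=
  ∀ (a : A) (b : B), P (f ⁻¹' {a} ∩ g ⁻¹' {b}) = P (f ⁻¹' {a}) * P (g ⁻¹' {b})

/-- A finite family of (discrete) random variables is mutually independent:
the joint law factorizes as the product of the marginals, expressed pointwise. -/
def iIndepRV {Ω ι : Type*} [Fintype ι] {A : ι → Type*} [MeasurableSpace Ω]
    (P : Measure Ω) (f : ∀ i, Ω → A i) : Prop :=
  ∀ a : ∀ i, A i, P (⋂ i, f i ⁻¹' {a i}) = ∏ i, P (f i ⁻¹' {a i})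

/-- Conditional independence of two (discrete) random tuples `f` and `g` given the
σ-algebra generated by a third (discrete) random tuple `h`, expressed pointwise:
`P(f = a, g = b | h = c) = P(f = a | h = c) * P(g = b | h = c)` for every `a`, `b`, `c`,
in a multiplied-out form that avoids division by zero. -/
def CondIndepRV {Ω A B C : Type*} [MeasurableSpace Ω] (P : Measure Ω)
    (f : Ω → A) (g : Ω → B) (h : Ω → C) : Prop :=
  ∀ (a : A) (b : B) (c : C),
    P (f ⁻¹' {a} ∩ g ⁻¹' {b} ∩ h ⁻¹' {c}) * P (h ⁻¹' {c}) =
      P (f ⁻¹' {a} ∩ h ⁻¹' {c}) * P (g ⁻¹' {b} ∩ h ⁻¹' {c})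

/-- A random variable valued in a finite type is uniformly distributed. -/
def UniformRV {Ω A : Type*} [Fintype A] [MeasurableSpace Ω] (P : Measure Ω)
    (f : Ω → A) : Prop :=
  ∀ a : A, P (f ⁻¹' {a}) = (Fintype.card A : ℝ≥0∞)⁻¹

/-- A two-round decentralized secure aggregation (DSA) scheme with `K` users,
minimum number `U` of surviving users, input length `L`, first-round message length
`LX`, and second-round message length `LY`, over the finite field `F`. -/
structure DSAScheme (F : Type) [Fintype F] (K U L LX LY : ℕ) where
  /-- The underlying probability space. -/
  Ω : Type
  /-- The σ-algebra on `Ω`. -/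
  [mΩ : MeasurableSpace Ω]
  /-- The probability measure. -/
  P : Measure Ω
  /-- `P` is a probability measure. -/
  [probP : IsProbabilityMeasure P]
  /-- The (finite) alphabet of the key random variables. -/
  Zt : Type
  /-- The key alphabet is finite. -/
  [fZt : Fintype Zt]
  /-- The input random variables `W₁, …, W_K`, valued in `F^L`. -/
  W : Fin K → Ω → (Fin L → F)
  /-- The key random variables `Z₁, …, Z_K`. -/
  Z : Fin K → Ω → Zt
  /-- The first-round (deterministic) encoders: `X_k = f_k (W_k, Z_k) ∈ F^{LX}`. -/
  f : Fin K → (Fin L → F) → Zt → (Fin LX → F)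
  /-- The second-round (deterministic) encoders, one for each surviving set `𝒰₁`:
  `Y_k^{𝒰₁} = g_{k,𝒰₁} (W_k, Z_k) ∈ F^{LY}`. -/
  g : Fin K → Finset (Fin K) → (Fin L → F) → Zt → (Fin LY → F)
  /-- Each `W_k` is a (measurable) random variable. -/
  measW : ∀ k (a : Fin L → F), MeasurableSet (W k ⁻¹' {a})
  /-- Each `Z_k` is a (measurable) random variable. -/
  measZ : ∀ k (z : Zt), MeasurableSet (Z k ⁻¹' {z})
  /-- The inputs `W₁, …, W_K` are mutually independent. -/
  indepW : iIndepRV P W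
  /-- Each input is uniformly distributed on `F^L`. -/
  unifW : ∀ k, UniformRV P (W k)
  /-- The tuple of inputs `(W₁, …, W_K)` is independent of the joint key tuple
  `(Z₁, …, Z_K)`. -/
  indepWZ : IndepRV P (fun ω (k : Fin K) => W k ω) (fun ω (k : Fin K) => Z k ω)

namespace DSAScheme

variable {F : Type} [Fintype F] [AddCommMonoid F] {K U L LX LY : ℕ}

/-- The first-round message of user `k`. -/
def X (𝓢 : DSAScheme F K U L LX LY) (k : Fin K) (ω : 𝓢.Ω) : Fin LX → F :=
  𝓢.f k (𝓢.W k ω) (𝓢.Z k ω)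

/-- The second-round message of user `k` when the first-round surviving set is `U1`. -/
def Y (𝓢 : DSAScheme F K U L LX LY) (U1 : Finset (Fin K)) (k : Fin K) (ω : 𝓢.Ω) :
    Fin LY → F :=
  𝓢.g k U1 (𝓢.W k ω) (𝓢.Z k ω)

/-- Correctness: for all surviving sets `𝒰₂ ⊆ 𝒰₁` with `|𝒰₂| ≥ U` and every user
`u ∈ 𝒰₂`, there is a deterministic decoder recovering `∑_{k ∈ 𝒰₁} W_k` almost surely
from `(X_k)_{k ∈ 𝒰₁ \ {u}}`, `(Y_k^{𝒰₁})_{k ∈ 𝒰₂ \ {u}}`, `W_u` and `Z_u`. -/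
def Correct (𝓢 : DSAScheme F K U L LX LY) : Prop :=
  ∀ U1 U2 : Finset (Fin K), U2 ⊆ U1 → U ≤ U2.card → ∀ u ∈ U2,
    ∃ d : ({k // k ∈ U1.erase u} → (Fin LX → F)) →
          ({k // k ∈ U2.erase u} → (Fin LY → F)) →
          (Fin L → F) → 𝓢.Zt → (Fin L → F),
      ∀ᵐ ω ∂𝓢.P,
        d (fun k => 𝓢.X k.1 ω) (fun k => 𝓢.Y U1 k.1 ω) (𝓢.W u ω) (𝓢.Z u ω)
          = ∑ k ∈ U1, 𝓢.W k ω

/-- Security against `T` colluding users: for every surviving set `𝒰₁` with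
`|𝒰₁| ≥ U`, every colluding set `𝒯` with `|𝒯| ≤ T` and every user `u`, the tuple
`((X_k)_{k ≠ u}, (Y_k^{𝒰₁})_{k ∈ 𝒰₁ \ {u}})` is conditionally independent of
`(W₁, …, W_K)` given `(∑_{k ∈ 𝒰₁} W_k, (W_k, Z_k)_{k ∈ 𝒯 ∪ {u}})`. -/
def Secure (𝓢 : DSAScheme F K U L LX LY) (T : ℕ) : Prop :=
  letI : MeasurableSpace 𝓢.Ω := 𝓢.mΩ
  ∀ U1 : Finset (Fin K), U ≤ U1.card →
  ∀ 𝒯 : Finset (Fin K), 𝒯.card ≤ T →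
  ∀ u : Fin K,
    CondIndepRV 𝓢.P
      (fun ω => ((fun k : {k : Fin K // k ≠ u} => 𝓢.X k.1 ω),
                 (fun k : {k // k ∈ U1.erase u} => 𝓢.Y U1 k.1 ω)))
      (fun ω (k : Fin K) => 𝓢.W k ω)
      (fun ω => (∑ k ∈ U1, 𝓢.W k ω,
                 fun k : {k // k ∈ insert u 𝒯} => (𝓢.W k.1 ω, 𝓢.Z k.1 ω)))

end DSAScheme

/-! Fix a key tuple `z` of positive probability and two users `u ≠ v`. Take `𝒰₁` to be everyone
and `𝒰₂` everyone but `v`, so that user `u` must decode from `X_v` without ever seeing `Y_v`.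
When user `v` holds input `a` and everybody else holds `0`, all of `u`'s observations other than
`X_v = f_v(a, z_v)` are independent of `a`, while the decoded sum is `a` itself; every such input
configuration has positive probability, so `a ↦ f_v(a, z_v)` is injective on `F^L`, whence
`q^L ≤ q^{L_X}`. -/

theorem MeasureTheory.exists_measure_preimage_singleton_ne_zero {Ω B : Type*}
    [MeasurableSpace Ω] [Countable B] (μ : Measure Ω) [NeZero μ] (f : Ω → B) :
    ∃ b, μ (f ⁻¹' {b}) ≠ 0 := by
  have hcover : μ (⋃ b, f ⁻¹' {b}) ≠ 0 := by
    rw [← Set.preimage_iUnion, Set.iUnion_of_singleton, Set.preimage_univ]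
    exact NeZero.ne _
  obtain ⟨b, hb⟩ := exists_measure_pos_of_not_measure_iUnion_null hcover
  exact ⟨b, hb.ne'⟩

theorem le_of_injective_fin_pi {F : Type*} [Fintype F] [Nontrivial F] {m n : ℕ}
    {φ : (Fin m → F) → (Fin n → F)} (hφ : Function.Injective φ) : m ≤ n := by
  have hcard := Fintype.card_le_of_injective φ hφ
  simp only [Fintype.card_fun, Fintype.card_fin] at hcard
  exact (Nat.pow_le_pow_iff_right Fintype.one_lt_card).mp hcard

namespace DSAScheme

attribute [local instance] mΩ probP fZt

variable {F : Type} [Fintype F] {K U L LX LY : ℕ}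

theorem measure_inputs_keys_ne_zero (𝓢 : DSAScheme F K U L LX LY) (w : Fin K → Fin L → F)
    {z : Fin K → 𝓢.Zt} (hz : 𝓢.P ((fun ω k => 𝓢.Z k ω) ⁻¹' {z}) ≠ 0) :
    𝓢.P ((fun ω k => 𝓢.W k ω) ⁻¹' {w} ∩ (fun ω k => 𝓢.Z k ω) ⁻¹' {z}) ≠ 0 := by
  have hinputs : (fun ω k => 𝓢.W k ω) ⁻¹' {w} = ⋂ k, 𝓢.W k ⁻¹' {w k} := by
    ext ω
    simp [funext_iff]
  rw [𝓢.indepWZ, hinputs, 𝓢.indepW]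
  refine mul_ne_zero (prod_ne_zero_iff.mpr fun k _ => ?_) hz
  rw [𝓢.unifW k]
  exact ENNReal.inv_ne_zero.mpr (ENNReal.natCast_ne_top _)

theorem exists_inputs_keys_eq_of_ae (𝓢 : DSAScheme F K U L LX LY) {p : 𝓢.Ω → Prop}
    (hp : ∀ᵐ ω ∂𝓢.P, p ω) (w : Fin K → Fin L → F) {z : Fin K → 𝓢.Zt}
    (hz : 𝓢.P ((fun ω k => 𝓢.Z k ω) ⁻¹' {z}) ≠ 0) :
    ∃ ω, (∀ k, 𝓢.W k ω = w k) ∧ (∀ k, 𝓢.Z k ω = z k) ∧ p ω := by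
  obtain ⟨ω, ⟨hW, hZ⟩, hpω⟩ :=
    ((frequently_ae_mem_iff.mpr (𝓢.measure_inputs_keys_ne_zero w hz)).and_eventually hp).exists
  exact ⟨ω, congrFun hW, congrFun hZ, hpω⟩

theorem Correct.exists_injective_f [AddCommMonoid F] {𝓢 : DSAScheme F K U L LX LY}
    (hcorrect : 𝓢.Correct) (hU : U ≤ K - 1) {u v : Fin K} (huv : u ≠ v) :
    ∃ z : 𝓢.Zt, Function.Injective (𝓢.f v · z) := by
  have hcard : U ≤ (univ.erase v).card := by simpa [card_erase_of_mem] using hU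
  obtain ⟨d, hd⟩ := hcorrect univ (univ.erase v) (subset_univ _) hcard u
    (mem_erase.mpr ⟨huv, mem_univ u⟩)
  obtain ⟨z, hz⟩ := exists_measure_preimage_singleton_ne_zero 𝓢.P (fun ω k => 𝓢.Z k ω)
  choose ω hW hZ hdec using fun a => 𝓢.exists_inputs_keys_eq_of_ae hd (Pi.single v a) hz
  refine ⟨z v, fun a b hab => ?_⟩
  have hsum : ∀ a, ∑ k, 𝓢.W k (ω a) = a := by simp [hW, sum_pi_single']
  have hX : ∀ k, 𝓢.X k (ω a) = 𝓢.X k (ω b) := by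
    intro k
    by_cases hk : k = v
    · subst hk
      simpa [DSAScheme.X, hW, hZ] using hab
    · simp [DSAScheme.X, hW, hZ, Pi.single_eq_of_ne hk]
  have hY : ∀ k ≠ v, 𝓢.Y univ k (ω a) = 𝓢.Y univ k (ω b) := by
    intro k hk
    simp [DSAScheme.Y, hW, hZ, Pi.single_eq_of_ne hk]
  calc a = ∑ k, 𝓢.W k (ω a) := (hsum a).symm
    _ = d (fun k => 𝓢.X k.1 (ω a)) (fun k => 𝓢.Y univ k.1 (ω a)) (𝓢.W u (ω a))
          (𝓢.Z u (ω a)) := (hdec a).symm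
    _ = d (fun k => 𝓢.X k.1 (ω b)) (fun k => 𝓢.Y univ k.1 (ω b)) (𝓢.W u (ω b))
          (𝓢.Z u (ω b)) := by
      congr 1
      · exact funext fun k => hX k
      · exact funext fun k => hY k (ne_of_mem_erase (mem_of_mem_erase k.2))
      · simp [hW, Pi.single_eq_of_ne huv]
      · simp [hZ]
    _ = b := (hdec b).trans (hsum b)

end DSAScheme

theorem dsa_first_round_converse_general
    (F : Type) [Field F] [Fintype F] (K U L LX LY : ℕ)
    (hK : 3 ≤ K) (hUK : U ≤ K - 1)
    (𝓢 : DSAScheme F K U L LX LY)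
    (hcorrect : 𝓢.Correct) :
    L ≤ LX ∧ (1 ≤ L → (1 : ℝ) ≤ (LX : ℝ) / (L : ℝ)) := by
  obtain ⟨z, hinj⟩ := hcorrect.exists_injective_f hUK
    (u := ⟨1, by omega⟩) (v := ⟨0, by omega⟩) (by simp [Fin.ext_iff])
  have hL : L ≤ LX := le_of_injective_fin_pi hinj
  refine ⟨hL, fun hL1 => ?_⟩
  rw [one_le_div (by exact_mod_cast hL1)]
  exact_mod_cast hL

/-- **First-round converse for decentralized secure aggregation.**
For a finite field `F` with `q` elements, `K ≥ 3`, `1 ≤ U ≤ K - 1`, every two-round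
DSA scheme satisfying the correctness constraint has `L_X ≥ L`; consequently the
first-round rate satisfies `R₁ = L_X / L ≥ 1` whenever `L ≥ 1`. -/
theorem dsa_first_round_converse
    (F : Type) [Field F] [Fintype F] (q K U L LX LY : ℕ)
    (hq : Fintype.card F = q)
    (hK : 3 ≤ K) (hU1 : 1 ≤ U) (hUK : U ≤ K - 1)
    (𝓢 : DSAScheme F K U L LX LY)
    (hcorrect : 𝓢.Correct) :
    L ≤ LX ∧ (1 ≤ L → (1 : ℝ) ≤ (LX : ℝ) / (L : ℝ)) :=
  dsa_first_round_converse_general F K U L LX LY hK hUK 𝓢 hcorrect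
end

section
/- Let F be a finite field with q elements, and let K ≥ 3, 0 ≤ T, T+1 < U ≤ K−1 and L, L_X, L_Y be natural numbers. For every two-round DSA scheme with input length L and second-round message length L_Y that satisfies both the correctness constraint and the security constraint with collusion parameter T, one has (U−T−1)·L_Y ≥ L. Consequently the second-round rate satisfies R₂ = L_Y/L ≥ 1/(U−T−1) whenever L ≥ 1. -/
open MeasureTheory Finset
open scoped ENNReal

/-!
Fix a surviving set `U1` of size `U`, a user `u ∈ U1`, colluders `𝒯 ⊆ U1 \ {u}` of size `T`,
a further user `j ∈ U1 \ ({u} ∪ 𝒯)` and a user `u' ∉ U1`, and condition on the inputs of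
`{u} ∪ 𝒯` being `0` and their keys being some `z` of positive probability. Security for `U1`
and for `U1 - j + u'`, applied to the input vector carrying `s` at `j` and `0` elsewhere (whose
sums over the two sets are `s` and `0`), shows that the conditional law of the first-round
messages does not depend on the sum `s` over `U1`. Hence one tuple `a` of first-round messages
is compatible with every sum `s`. By correctness, `s` is decoded from `a`, the data of `u` and
the second-round messages of `U1`, of which those of `𝒯` are fixed by `z`; so the `U - T - 1`
remaining second-round messages determine `s`, and `|F| ^ L ≤ |F| ^ ((U - T - 1) * L_Y)`.
-/

section Discrete

variable {Ω : Type*} [MeasurableSpace Ω] {P : Measure Ω}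

theorem measure_eq_sum_measure_inter_preimage {B : Type*} [Fintype B] {f : Ω → B}
    (hf : ∀ b, MeasurableSet (f ⁻¹' {b})) (E : Set Ω) :
    P E = ∑ b, P (E ∩ f ⁻¹' {b}) := by
  calc P E = P.restrict (⋃ b, f ⁻¹' {b}) E := by
        rw [← Set.preimage_iUnion, Set.iUnion_of_singleton, Set.preimage_univ,
          Measure.restrict_univ]
    _ = ∑ b, P.restrict (f ⁻¹' {b}) E := by
        rw [Measure.restrict_iUnion (fun b b' hbb' => (Set.disjoint_singleton.2 hbb').preimage f)
          hf, Measure.sum_apply_of_countable, tsum_fintype]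
    _ = _ := Finset.sum_congr rfl fun b _ => Measure.restrict_apply' (hf b)

theorem exists_measure_inter_preimage_ne_zero {B : Type*} [Fintype B] {f : Ω → B}
    (hf : ∀ b, MeasurableSet (f ⁻¹' {b})) {E : Set Ω} (hE : P E ≠ 0) :
    ∃ b, P (E ∩ f ⁻¹' {b}) ≠ 0 := by
  rw [measure_eq_sum_measure_inter_preimage hf] at hE
  obtain ⟨b, -, hb⟩ := Finset.exists_ne_zero_of_sum_ne_zero hE
  exact ⟨b, hb⟩

theorem CondIndepRV.fst {A A' B C : Type*} [Fintype A'] {f : Ω → A × A'} {g : Ω → B}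
    {h : Ω → C} (hf : ∀ a', MeasurableSet ((fun ω => (f ω).2) ⁻¹' {a'}))
    (H : CondIndepRV P f g h) : CondIndepRV P (fun ω => (f ω).1) g h := by
  intro a b c
  have hfib : ∀ a', f ⁻¹' {(a, a')} = (fun ω => (f ω).1) ⁻¹' {a} ∩ (fun ω => (f ω).2) ⁻¹' {a'} := by
    intro a'; ext ω; simp [Prod.ext_iff]
  calc _ = ∑ a', P (f ⁻¹' {(a, a')} ∩ g ⁻¹' {b} ∩ h ⁻¹' {c}) * P (h ⁻¹' {c}) := by
        rw [measure_eq_sum_measure_inter_preimage hf, Finset.sum_mul]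
        refine Finset.sum_congr rfl fun a' _ => ?_
        rw [hfib]; congr 2; ext ω; simp only [Set.mem_inter_iff]; tauto
    _ = ∑ a', P (f ⁻¹' {(a, a')} ∩ h ⁻¹' {c}) * P (g ⁻¹' {b} ∩ h ⁻¹' {c}) :=
        Finset.sum_congr rfl fun a' _ => H _ b c
    _ = _ := by
        rw [measure_eq_sum_measure_inter_preimage hf ((fun ω => (f ω).1) ⁻¹' {a} ∩ h ⁻¹' {c}),
          Finset.sum_mul]
        refine Finset.sum_congr rfl fun a' _ => ?_
        rw [hfib]; congr 2; ext ω; simp only [Set.mem_inter_iff]; tauto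

/-- Conditioning further on `{g = w}` does not change the law of `f`, and on `{g = w}` the two
conditioning events agree. -/
theorem CondIndepRV.measure_mul_eq_of_inter_eq {A B C₁ C₂ : Type*} [IsFiniteMeasure P]
    {f : Ω → A} {g : Ω → B} {h₁ : Ω → C₁} {h₂ : Ω → C₂}
    (H₁ : CondIndepRV P f g h₁) (H₂ : CondIndepRV P f g h₂) {w : B} {d₁ : C₁} {d₂ : C₂}
    (hw : g ⁻¹' {w} ∩ h₁ ⁻¹' {d₁} = g ⁻¹' {w} ∩ h₂ ⁻¹' {d₂})
    (hw₀ : P (g ⁻¹' {w} ∩ h₁ ⁻¹' {d₁}) ≠ 0) (a : A) :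
    P (f ⁻¹' {a} ∩ h₁ ⁻¹' {d₁}) * P (h₂ ⁻¹' {d₂}) =
      P (f ⁻¹' {a} ∩ h₂ ⁻¹' {d₂}) * P (h₁ ⁻¹' {d₁}) := by
  have hfw : f ⁻¹' {a} ∩ g ⁻¹' {w} ∩ h₁ ⁻¹' {d₁} = f ⁻¹' {a} ∩ g ⁻¹' {w} ∩ h₂ ⁻¹' {d₂} := by
    rw [Set.inter_assoc, hw, ← Set.inter_assoc]
  have e₁ := H₁ a w d₁
  have e₂ := H₂ a w d₂
  rw [hfw] at e₁
  rw [← hw] at e₂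
  rw [← ENNReal.mul_left_inj hw₀ (measure_ne_top _ _)]
  calc _ = P (f ⁻¹' {a} ∩ g ⁻¹' {w} ∩ h₂ ⁻¹' {d₂}) * P (h₁ ⁻¹' {d₁}) * P (h₂ ⁻¹' {d₂}) := by
        rw [e₁]; ring
    _ = _ := by rw [mul_right_comm, e₂]; ring

end Discrete

theorem le_card_mul_of_surjective {F ι : Type*} [Fintype F] [Nontrivial F] [Fintype ι]
    [DecidableEq ι] {m n : ℕ} {h : (ι → Fin m → F) → Fin n → F} (hh : Function.Surjective h) :
    n ≤ Fintype.card ι * m := by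
  have hcard := Fintype.card_le_of_surjective h hh
  simp only [Fintype.card_fun, Fintype.card_fin, ← pow_mul] at hcard
  exact ((Nat.pow_le_pow_iff_right Fintype.one_lt_card).1 hcard).trans_eq (mul_comm _ _)

attribute [instance] DSAScheme.mΩ DSAScheme.probP DSAScheme.fZt

namespace DSAScheme

section Randomness

variable {F : Type} [Fintype F] {K U L LX LY : ℕ} (𝓢 : DSAScheme F K U L LX LY)

def inputs (ω : 𝓢.Ω) : Fin K → Fin L → F := fun k => 𝓢.W k ω

def keys (ω : 𝓢.Ω) : Fin K → 𝓢.Zt := fun k => 𝓢.Z k ω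

def master (ω : 𝓢.Ω) : Fin K → (Fin L → F) × 𝓢.Zt := fun k => (𝓢.W k ω, 𝓢.Z k ω)

theorem measurableSet_preimage_master (S : Set (Fin K → (Fin L → F) × 𝓢.Zt)) :
    MeasurableSet (𝓢.master ⁻¹' S) := by
  have hfiber : ∀ v, 𝓢.master ⁻¹' {v} = ⋂ k, 𝓢.W k ⁻¹' {(v k).1} ∩ 𝓢.Z k ⁻¹' {(v k).2} := by
    intro v; ext ω
    simp [master, funext_iff, Prod.ext_iff]
  rw [← Set.biUnion_of_singleton S, Set.preimage_iUnion₂]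
  exact .biUnion S.to_countable fun v _ =>
    hfiber v ▸ .iInter fun k => (𝓢.measW k _).inter (𝓢.measZ k _)

theorem measure_preimage_inputs_inter_keys_ne_zero (w : Fin K → Fin L → F) {z : Fin K → 𝓢.Zt}
    (hz : 𝓢.P (𝓢.keys ⁻¹' {z}) ≠ 0) : 𝓢.P (𝓢.inputs ⁻¹' {w} ∩ 𝓢.keys ⁻¹' {z}) ≠ 0 := by
  have hw : 𝓢.P (𝓢.inputs ⁻¹' {w}) ≠ 0 := by
    rw [show 𝓢.inputs ⁻¹' {w} = ⋂ k, 𝓢.W k ⁻¹' {w k} by ext ω; simp [inputs, funext_iff],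
      𝓢.indepW w, Finset.prod_ne_zero_iff]
    exact fun k _ => 𝓢.unifW k (w k) ▸ ENNReal.inv_ne_zero.2 (ENNReal.natCast_ne_top _)
  rw [show 𝓢.P (𝓢.inputs ⁻¹' {w} ∩ 𝓢.keys ⁻¹' {z}) =
    𝓢.P (𝓢.inputs ⁻¹' {w}) * 𝓢.P (𝓢.keys ⁻¹' {z}) from 𝓢.indepWZ w z]
  exact mul_ne_zero hw hz

theorem exists_measure_preimage_keys_ne_zero : ∃ z, 𝓢.P (𝓢.keys ⁻¹' {z}) ≠ 0 := by
  obtain ⟨z, hz⟩ := exists_measure_inter_preimage_ne_zero (P := 𝓢.P) (f := 𝓢.keys)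
    (fun z => 𝓢.measurableSet_preimage_master {v | (fun k => (v k).2) = z}) (E := Set.univ)
    (by simp)
  exact ⟨z, by simpa using hz⟩

end Randomness

variable {F : Type} [Fintype F] [AddCommMonoid F] {K U L LX LY : ℕ}
  (𝓢 : DSAScheme F K U L LX LY)

def firstRound (u : Fin K) (ω : 𝓢.Ω) : {k // k ≠ u} → Fin LX → F := fun k => 𝓢.X k.1 ω

def sumView (U1 𝒯 : Finset (Fin K)) (ω : 𝓢.Ω) :
    (Fin L → F) × ({k // k ∈ 𝒯} → (Fin L → F) × 𝓢.Zt) :=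
  (∑ k ∈ U1, 𝓢.inputs ω k, fun k => 𝓢.master ω k)

def sumEvent (U1 𝒯 : Finset (Fin K)) (z : Fin K → 𝓢.Zt) (s : Fin L → F) : Set 𝓢.Ω :=
  𝓢.sumView U1 𝒯 ⁻¹' {(s, fun k => (0, z k.1))}

variable {𝓢}

theorem mem_sumEvent {U1 𝒯 : Finset (Fin K)} {z : Fin K → 𝓢.Zt} {s : Fin L → F} {ω : 𝓢.Ω} :
    ω ∈ 𝓢.sumEvent U1 𝒯 z s ↔
      ∑ k ∈ U1, 𝓢.W k ω = s ∧ ∀ k ∈ 𝒯, 𝓢.W k ω = 0 ∧ 𝓢.Z k ω = z k := by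
  simp [sumEvent, sumView, inputs, master, funext_iff]

theorem measure_preimage_inputs_inter_sumEvent_ne_zero {U1 𝒯 : Finset (Fin K)}
    {w : Fin K → Fin L → F} (hw : ∀ k ∈ 𝒯, w k = 0) {z : Fin K → 𝓢.Zt}
    (hz : 𝓢.P (𝓢.keys ⁻¹' {z}) ≠ 0) :
    𝓢.P (𝓢.inputs ⁻¹' {w} ∩ 𝓢.sumEvent U1 𝒯 z (∑ k ∈ U1, w k)) ≠ 0 := by
  refine fun h0 => 𝓢.measure_preimage_inputs_inter_keys_ne_zero w hz (measure_mono_null ?_ h0)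
  rintro ω ⟨hωw, hωz⟩
  obtain rfl : 𝓢.inputs ω = w := hωw
  obtain rfl : 𝓢.keys ω = z := hωz
  exact ⟨rfl, mem_sumEvent.2 ⟨rfl, fun k hk => ⟨hw k hk, rfl⟩⟩⟩

theorem measure_preimage_inputs_single_inter_sumEvent_ne_zero {U1 𝒯 : Finset (Fin K)} {j : Fin K}
    (hj : j ∈ U1 \ 𝒯) {z : Fin K → 𝓢.Zt} (hz : 𝓢.P (𝓢.keys ⁻¹' {z}) ≠ 0) (s : Fin L → F) :
    𝓢.P (𝓢.inputs ⁻¹' {Pi.single j s} ∩ 𝓢.sumEvent U1 𝒯 z s) ≠ 0 := by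
  classical
  obtain ⟨hjU1, hj𝒯⟩ := Finset.mem_sdiff.1 hj
  have hw : ∀ k ∈ 𝒯, Pi.single (M := fun _ => Fin L → F) j s k = 0 := fun k hk => by
    rw [Pi.single_eq_of_ne (fun h : k = j => hj𝒯 (h ▸ hk))]
  simpa [hjU1] using measure_preimage_inputs_inter_sumEvent_ne_zero (U1 := U1) hw hz

theorem Secure.condIndepRV_firstRound {T : ℕ} (hs : 𝓢.Secure T) {U1 𝒯 : Finset (Fin K)}
    (hU1 : U ≤ U1.card) (h𝒯 : 𝒯.card ≤ T) (u : Fin K) :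
    CondIndepRV 𝓢.P (𝓢.firstRound u) 𝓢.inputs (𝓢.sumView U1 (insert u 𝒯)) :=
  CondIndepRV.fst (fun b => 𝓢.measurableSet_preimage_master
    {v | (fun k : {k // k ∈ U1.erase u} => 𝓢.g k.1 U1 (v k).1 (v k).2) = b})
    (hs U1 hU1 𝒯 h𝒯 u)

theorem Secure.measure_firstRound_inter_sumEvent_mul_eq {T : ℕ} (hs : 𝓢.Secure T)
    {U1 𝒯 : Finset (Fin K)} {u j u' : Fin K} (hU1 : U ≤ U1.card) (h𝒯 : 𝒯.card ≤ T)
    (hj : j ∈ U1 \ insert u 𝒯) (hu' : u' ∉ U1) {z : Fin K → 𝓢.Zt}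
    (hz : 𝓢.P (𝓢.keys ⁻¹' {z}) ≠ 0) (a : {k // k ≠ u} → Fin LX → F) (s s' : Fin L → F) :
    𝓢.P (𝓢.firstRound u ⁻¹' {a} ∩ 𝓢.sumEvent U1 (insert u 𝒯) z s) *
        𝓢.P (𝓢.sumEvent U1 (insert u 𝒯) z s') =
      𝓢.P (𝓢.firstRound u ⁻¹' {a} ∩ 𝓢.sumEvent U1 (insert u 𝒯) z s') *
        𝓢.P (𝓢.sumEvent U1 (insert u 𝒯) z s) := by
  classical
  have hjU1 := (Finset.mem_sdiff.1 hj).1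
  set U1' := insert u' (U1.erase j)
  have hU1' : U ≤ U1'.card := by
    rwa [Finset.card_insert_of_notMem fun h => hu' (Finset.mem_of_mem_erase h),
      Finset.card_erase_add_one hjU1]
  have hjU1' : j ∉ U1' := by
    simpa [U1'] using fun h : j = u' => hu' (h ▸ hjU1)
  have transfer : ∀ t, 𝓢.P (𝓢.firstRound u ⁻¹' {a} ∩ 𝓢.sumEvent U1 (insert u 𝒯) z t) *
        𝓢.P (𝓢.sumEvent U1' (insert u 𝒯) z 0) =
      𝓢.P (𝓢.firstRound u ⁻¹' {a} ∩ 𝓢.sumEvent U1' (insert u 𝒯) z 0) *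
        𝓢.P (𝓢.sumEvent U1 (insert u 𝒯) z t) := by
    intro t
    refine (hs.condIndepRV_firstRound hU1 h𝒯 u).measure_mul_eq_of_inter_eq
      (hs.condIndepRV_firstRound hU1' h𝒯 u) (w := Pi.single j t) ?_
      (measure_preimage_inputs_single_inter_sumEvent_ne_zero hj hz t) a
    ext ω
    refine and_congr_right fun (hω : 𝓢.inputs ω = Pi.single j t) => ?_
    change ω ∈ 𝓢.sumEvent U1 _ z t ↔ ω ∈ 𝓢.sumEvent U1' _ z 0
    simp only [mem_sumEvent, show ∀ k, 𝓢.W k ω = _ from congrFun hω,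
      Finset.sum_pi_single', if_pos hjU1, if_neg hjU1', true_and]
  have hQ : 𝓢.P (𝓢.sumEvent U1' (insert u 𝒯) z 0) ≠ 0 := fun h0 =>
    measure_preimage_inputs_inter_sumEvent_ne_zero (U1 := U1') (w := 0) (fun _ _ => rfl) hz
      (measure_mono_null Set.inter_subset_right (by simpa using h0))
  rw [← ENNReal.mul_left_inj hQ (measure_ne_top _ _), mul_right_comm, transfer s, mul_right_comm, ← transfer s', mul_right_comm]

theorem Correct.le_card_mul [Nontrivial F] {T : ℕ} (hc : 𝓢.Correct) (hs : 𝓢.Secure T)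
    {U1 𝒯 : Finset (Fin K)} {u j u' : Fin K} (hU1 : U ≤ U1.card) (hu : u ∈ U1)
    (h𝒯 : 𝒯.card ≤ T) (hj : j ∈ U1 \ insert u 𝒯) (hu' : u' ∉ U1) :
    L ≤ ((U1.erase u) \ 𝒯).card * LY := by
  classical
  obtain ⟨z, hz⟩ := 𝓢.exists_measure_preimage_keys_ne_zero
  have hD : ∀ s, 𝓢.P (𝓢.sumEvent U1 (insert u 𝒯) z s) ≠ 0 := fun s h0 =>
    measure_preimage_inputs_single_inter_sumEvent_ne_zero hj hz s
      (measure_mono_null Set.inter_subset_right h0)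
  obtain ⟨a, ha⟩ := exists_measure_inter_preimage_ne_zero (f := 𝓢.firstRound u)
    (fun a => 𝓢.measurableSet_preimage_master
      {v | (fun k : {k // k ≠ u} => 𝓢.f k.1 (v k).1 (v k).2) = a}) (hD 0)
  have hA : ∀ s, 𝓢.P (𝓢.firstRound u ⁻¹' {a} ∩ 𝓢.sumEvent U1 (insert u 𝒯) z s) ≠ 0 :=
    fun s h0 => mul_ne_zero (Set.inter_comm _ (𝓢.firstRound u ⁻¹' {a}) ▸ ha) (hD s)
      ((hs.measure_firstRound_inter_sumEvent_mul_eq hU1 h𝒯 hj hu' hz a 0 s).trans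
        (by rw [h0, zero_mul]))
  obtain ⟨d, hd⟩ := hc U1 U1 subset_rfl hU1 u hu
  rw [← Fintype.card_coe]
  refine le_card_mul_of_surjective (h := fun (y : {k // k ∈ (U1.erase u) \ 𝒯} → Fin LY → F) =>
    d (fun k => a ⟨k, Finset.ne_of_mem_erase k.2⟩)
      (fun k => if hk : k.1 ∈ 𝒯 then 𝓢.g k U1 0 (z k) else y ⟨k, Finset.mem_sdiff.2 ⟨k.2, hk⟩⟩)
      0 (z u)) fun s => ?_
  obtain ⟨ω, ⟨hωa, hωD⟩, hωd⟩ :=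
    Measure.exists_mem_of_measure_ne_zero_of_ae (hA s) (ae_restrict_of_ae hd)
  obtain ⟨hsum, hview⟩ := mem_sumEvent.1 hωD
  refine ⟨fun k => 𝓢.Y U1 k ω, ?_⟩
  rw [← hsum, ← hωd, (hview u (Finset.mem_insert_self u 𝒯)).1,
    (hview u (Finset.mem_insert_self u 𝒯)).2]
  dsimp only
  congr 1
  · funext k
    exact (congrFun hωa ⟨k, _⟩).symm
  · funext k
    split_ifs with hk
    · obtain ⟨hW, hZ⟩ := hview k (Finset.mem_insert_of_mem hk)
      simp only [Y, hW, hZ]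
    · rfl

theorem Correct.le_mul [Nontrivial F] {T : ℕ} (hc : 𝓢.Correct) (hs : 𝓢.Secure T)
    (hTU : T + 1 < U) (hUK : U < K) : L ≤ (U - T - 1) * LY := by
  classical
  obtain ⟨U1, -, hU1⟩ := Finset.exists_subset_card_eq (s := (Finset.univ : Finset (Fin K)))
    (n := U) (by simpa using hUK.le)
  obtain ⟨u, hu⟩ := Finset.card_pos.1 (show 0 < U1.card by omega)
  obtain ⟨𝒯, h𝒯U1, h𝒯⟩ := Finset.exists_subset_card_eq (s := U1.erase u) (n := T)
    (by rw [Finset.card_erase_of_mem hu]; omega)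
  obtain ⟨j, hj⟩ : (U1 \ insert u 𝒯).Nonempty := by
    rw [← Finset.card_pos, Finset.card_sdiff_of_subset
      (Finset.insert_subset hu (h𝒯U1.trans (Finset.erase_subset u U1))),
      Finset.card_insert_of_notMem fun h => (Finset.mem_erase.1 (h𝒯U1 h)).1 rfl]
    omega
  obtain ⟨u', hu'⟩ : ∃ u', u' ∉ U1 := by
    by_contra! hall
    have := Finset.card_le_card fun k (_ : k ∈ Finset.univ) => hall k
    simp only [Finset.card_univ, Fintype.card_fin] at this
    omega
  have hcard : ((U1.erase u) \ 𝒯).card = U - T - 1 := by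
    rw [Finset.card_sdiff_of_subset h𝒯U1, Finset.card_erase_of_mem hu]
    omega
  exact hcard ▸ hc.le_card_mul hs hU1.ge hu h𝒯.le hj hu'

end DSAScheme

theorem dsa_second_round_converse_general
    (F : Type) [Field F] [Fintype F] (K U T L LX LY : ℕ)
    (hTU : T + 1 < U) (hUK : U ≤ K - 1)
    (𝓢 : DSAScheme F K U L LX LY)
    (hcorrect : 𝓢.Correct) (hsecure : 𝓢.Secure T) :
    L ≤ (U - T - 1) * LY ∧
      (1 ≤ L → (1 : ℝ) / ((U - T - 1 : ℕ) : ℝ) ≤ (LY : ℝ) / (L : ℝ)) := by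
  have hbound := hcorrect.le_mul hsecure hTU (by omega)
  refine ⟨hbound, fun hL => ?_⟩
  rw [div_le_div_iff₀ (by norm_cast; omega) (by norm_cast), one_mul, mul_comm]
  exact_mod_cast hbound

/-- **Second-round converse for decentralized secure aggregation.**
For a finite field `F` with `q` elements, `K ≥ 3`, `T + 1 < U ≤ K - 1`, every two-round
DSA scheme satisfying the correctness constraint and the security constraint with
collusion parameter `T` has `(U - T - 1) · L_Y ≥ L`; consequently the second-round
rate satisfies `R₂ = L_Y / L ≥ 1 / (U - T - 1)` whenever `L ≥ 1`. -/
theorem dsa_second_round_converse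
    (F : Type) [Field F] [Fintype F] (q K U T L LX LY : ℕ)
    (hq : Fintype.card F = q)
    (hK : 3 ≤ K) (hTU : T + 1 < U) (hUK : U ≤ K - 1)
    (𝓢 : DSAScheme F K U L LX LY)
    (hcorrect : 𝓢.Correct) (hsecure : 𝓢.Secure T) :
    L ≤ (U - T - 1) * LY ∧
      (1 ≤ L → (1 : ℝ) / ((U - T - 1 : ℕ) : ℝ) ≤ (LY : ℝ) / (L : ℝ)) :=
  dsa_second_round_converse_general F K U T L LX LY hTU hUK 𝓢 hcorrect hsecure
end

section
/- Let F be a finite field with q elements, and let K ≥ 3, 0 ≤ T, T+1 < U ≤ K−1, and suppose q > K. Then there exists a two-round DSA scheme with input length L = U−T−1, first-round message length L_X = U−T−1, and second-round message length L_Y = 1 that satisfies both the correctness constraint and the security constraint with collusion parameter T. Consequently the rate pair (R₁, R₂) = (1, 1/(U−T−1)) is achievable. -/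
open MeasureTheory Finset
open scoped ENNReal

namespace DSAAux

open Polynomial

/-! ### Counting lemmas for the uniform measure on a finite type -/

/-- The uniform measure on a nonempty finite type, with the top σ-algebra. -/
noncomputable def unif (Ω : Type*) [Fintype Ω] [Nonempty Ω] : @Measure Ω ⊤ :=
  @PMF.toMeasure Ω ⊤ (PMF.uniformOfFintype Ω)

instance (Ω : Type*) [Fintype Ω] [Nonempty Ω] : @IsProbabilityMeasure Ω ⊤ (unif Ω) :=
  @PMF.toMeasure.isProbabilityMeasure Ω ⊤ _

lemma unif_apply {Ω : Type*} [Fintype Ω] [Nonempty Ω] (S : Set Ω) :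
    unif Ω S = (S.ncard : ℝ≥0∞) * (Fintype.card Ω : ℝ≥0∞)⁻¹ := by
  classical
  rw [unif, @PMF.toMeasure_apply Ω ⊤ _ S MeasurableSpace.measurableSet_top]
  rw [tsum_fintype]
  have : ∀ x : Ω, S.indicator (⇑(PMF.uniformOfFintype Ω)) x
      = if x ∈ S then (Fintype.card Ω : ℝ≥0∞)⁻¹ else 0 := by
    intro x
    by_cases hx : x ∈ S <;> simp [Set.indicator, hx, PMF.uniformOfFintype_apply]
  simp only [this]
  rw [← Finset.sum_filter, Finset.sum_const, nsmul_eq_mul]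
  have : (Finset.univ.filter (· ∈ S)).card = S.ncard := by
    rw [Set.ncard_eq_toFinset_card']
    congr 1
    ext x; simp
  rw [this]

lemma unif_mul_eq_mul {Ω : Type*} [Fintype Ω] [Nonempty Ω] {S1 S2 S3 S4 : Set Ω}
    (h : S1.ncard * S2.ncard = S3.ncard * S4.ncard) :
    unif Ω S1 * unif Ω S2 = unif Ω S3 * unif Ω S4 := by
  simp only [unif_apply]
  rw [mul_mul_mul_comm, ← Nat.cast_mul, h, Nat.cast_mul, mul_mul_mul_comm]

lemma ncard_preimage_equiv {Γ Δ : Type*} (e : Γ ≃ Δ) (S : Set Δ) :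
    (⇑e ⁻¹' S).ncard = S.ncard := by
  rw [← Nat.card_coe_set_eq, ← Nat.card_coe_set_eq]
  exact Nat.card_congr ((e.image _).trans (Equiv.setCongr (e.image_preimage S)))

lemma ncard_prod {A B : Type*} (s : Set A) (t : Set B) :
    (s ×ˢ t).ncard = s.ncard * t.ncard := by
  rw [← Nat.card_coe_set_eq, ← Nat.card_coe_set_eq, ← Nat.card_coe_set_eq]
  rw [Nat.card_congr (Equiv.Set.prod s t), Nat.card_prod]

/-- Counting a "dependent product" set with fibers of constant size, exhibited by
a family of translations. -/
lemma ncard_dep_prod {A B : Type*} (s : Set A) (t : A → Set B) (t0 : Set B)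
    (τ : A → B ≃ B) (hτ : ∀ a ∈ s, ∀ y : B, y ∈ t0 ↔ τ a y ∈ t a) :
    {p : A × B | p.1 ∈ s ∧ p.2 ∈ t p.1}.ncard = s.ncard * t0.ncard := by
  rw [← Nat.card_coe_set_eq, ← Nat.card_coe_set_eq, ← Nat.card_coe_set_eq,
    ← Nat.card_prod]
  apply Nat.card_congr
  refine Equiv.symm ?_
  refine ⟨fun p => ⟨(p.1.1, τ p.1.1 p.2.1), p.1.2, ((hτ p.1.1 p.1.2 p.2.1).mp p.2.2)⟩,
    fun q => (⟨q.1.1, q.2.1⟩, ⟨(τ q.1.1).symm q.1.2, ?_⟩), fun p => ?_, fun q => ?_⟩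
  · rw [hτ q.1.1 q.2.1, Equiv.apply_symm_apply]
    exact q.2.2
  · ext <;> simp
  · ext <;> simp

lemma ncard_fst_fiber {A B : Type*} [Fintype B] (a : A) :
    (Prod.fst ⁻¹' {a} : Set (A × B)).ncard = Fintype.card B := by
  have h : (Prod.fst ⁻¹' {a} : Set (A × B)) = ({a} : Set A) ×ˢ (Set.univ : Set B) := by
    ext p; exact ⟨fun h => ⟨h, trivial⟩, fun h => h.1⟩
  rw [h, ncard_prod, Set.ncard_singleton, one_mul, Set.ncard_univ, Nat.card_eq_fintype_card]

lemma ncard_snd_fiber {A B : Type*} [Fintype A] (S : Set B) :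
    (Prod.snd ⁻¹' S : Set (A × B)).ncard = Fintype.card A * S.ncard := by
  have h : (Prod.snd ⁻¹' S : Set (A × B)) = (Set.univ : Set A) ×ˢ S := by
    ext p; exact ⟨fun h => ⟨trivial, h⟩, fun h => h.2⟩
  rw [h, ncard_prod, Set.ncard_univ, Nat.card_eq_fintype_card]

lemma ncard_pi_fiber {ι : Type*} [Fintype ι] [DecidableEq ι] (β : ι → Type*) [∀ i, Fintype (β i)]
    (k : ι) (a : β k) :
    {f : ∀ i, β i | f k = a}.ncard = Fintype.card (∀ j : {j // j ≠ k}, β j.1) := by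
  have h : {f : ∀ i, β i | f k = a} = ⇑(Equiv.piSplitAt k β) ⁻¹' (Prod.fst ⁻¹' {a}) := by
    ext f; simp [Equiv.piSplitAt]
  rw [h, ncard_preimage_equiv, ncard_fst_fiber]

lemma card_pi_split {ι : Type*} [Fintype ι] [DecidableEq ι] (β : ι → Type*) [∀ i, Fintype (β i)]
    (k : ι) :
    Fintype.card (∀ i, β i)
      = Fintype.card (β k) * Fintype.card (∀ j : {j // j ≠ k}, β j.1) := by
  rw [Fintype.card_congr (Equiv.piSplitAt k β), Fintype.card_prod]

lemma ennreal_helper {n m : ℕ} (hn : n ≠ 0) (hm : m ≠ 0) :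
    (m : ℝ≥0∞) * ((n * m : ℕ) : ℝ≥0∞)⁻¹ = ((n : ℕ) : ℝ≥0∞)⁻¹ := by
  rw [Nat.cast_mul, ENNReal.mul_inv (Or.inr (ENNReal.natCast_ne_top m))
    (Or.inl (ENNReal.natCast_ne_top n)), mul_left_comm,
    ENNReal.mul_inv_cancel (by exact_mod_cast hm) (ENNReal.natCast_ne_top m), mul_one]

/-! ### The concrete scheme ingredients -/

variable {F : Type} [Field F] {K T L : ℕ}

/-- The key-randomness space: individual masks plus masking coefficients for
each possible surviving set. -/
abbrev KeySp (F : Type) (K T L : ℕ) : Type :=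
  (Fin K → Fin L → F) × (Finset (Fin K) → Fin (T + 1) → F)

/-- The full sample space: inputs times key randomness. -/
abbrev OmegaSp (F : Type) (K T L : ℕ) : Type :=
  (Fin K → Fin L → F) × KeySp F K T L

/-- The second-round share of user `k` for surviving set `V1`. -/
def share (α : Fin K → F) (V1 : Finset (Fin K)) (k : Fin K) (κ : KeySp F K T L) : F :=
  (∑ ℓ : Fin L, (∑ j ∈ V1, κ.1 j) ℓ * α k ^ (ℓ : ℕ)) +
    ∑ i : Fin (T + 1), κ.2 V1 i * α k ^ (L + (i : ℕ))

/-- The sharing polynomial. -/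
noncomputable def Qpoly (V1 : Finset (Fin K)) (κ : KeySp F K T L) : Polynomial F :=
  (∑ ℓ : Fin L, C ((∑ j ∈ V1, κ.1 j) ℓ) * X ^ (ℓ : ℕ)) +
    ∑ i : Fin (T + 1), C (κ.2 V1 i) * X ^ (L + (i : ℕ))

lemma share_eq_eval (α : Fin K → F) (V1 : Finset (Fin K)) (k : Fin K) (κ : KeySp F K T L) :
    share α V1 k κ = (Qpoly V1 κ).eval (α k) := by
  simp [share, Qpoly, Polynomial.eval_finset_sum]

lemma degree_Qpoly_lt (V1 : Finset (Fin K)) (κ : KeySp F K T L) :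
    (Qpoly V1 κ).degree < ((L + T + 1 : ℕ) : WithBot ℕ) := by
  refine lt_of_le_of_lt (Polynomial.degree_add_le _ _) (max_lt ?_ ?_)
  · refine lt_of_le_of_lt (Polynomial.degree_sum_le _ _) ?_
    rw [Finset.sup_lt_iff (by exact WithBot.bot_lt_coe _)]
    intro m _
    refine lt_of_le_of_lt (Polynomial.degree_C_mul_X_pow_le _ _) ?_
    exact_mod_cast (by omega : (m : ℕ) < L + T + 1)
  · refine lt_of_le_of_lt (Polynomial.degree_sum_le _ _) ?_
    rw [Finset.sup_lt_iff (by exact WithBot.bot_lt_coe _)]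
    intro m _
    refine lt_of_le_of_lt (Polynomial.degree_C_mul_X_pow_le _ _) ?_
    exact_mod_cast (by omega : L + (m : ℕ) < L + T + 1)

lemma Qpoly_coeff (V1 : Finset (Fin K)) (κ : KeySp F K T L) (ℓ : Fin L) :
    (Qpoly V1 κ).coeff (ℓ : ℕ) = (∑ j ∈ V1, κ.1 j) ℓ := by
  rw [Qpoly, Polynomial.coeff_add, Polynomial.finset_sum_coeff, Polynomial.finset_sum_coeff]
  have h1 : ∑ m : Fin L, (C ((∑ j ∈ V1, κ.1 j) m) * X ^ (m : ℕ)).coeff (ℓ : ℕ)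
      = (∑ j ∈ V1, κ.1 j) ℓ := by
    rw [Finset.sum_eq_single ℓ]
    · rw [Polynomial.coeff_C_mul_X_pow, if_pos rfl]
    · intro m _ hm
      rw [Polynomial.coeff_C_mul_X_pow, if_neg]
      intro h
      exact hm (Fin.val_injective h).symm
    · simp
  have h2 : ∑ m : Fin (T + 1), (C (κ.2 V1 m) * X ^ (L + (m : ℕ))).coeff (ℓ : ℕ) = 0 := by
    refine Finset.sum_eq_zero fun m _ => ?_
    rw [Polynomial.coeff_C_mul_X_pow, if_neg]
    have := ℓ.isLt
    omega
  rw [h1, h2, add_zero]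

/-- The difference of inputs, summed over a set. -/
def sigmaV (w w' : Fin K → Fin L → F) (V1 : Finset (Fin K)) : Fin L → F :=
  fun ℓ => ∑ j ∈ V1, (w j ℓ - w' j ℓ)

/-- The correction polynomial used to keep shares at nodes of `𝒮` unchanged. -/
noncomputable def Gpoly (α : Fin K → F) (𝒮 : Finset (Fin K)) (w w' : Fin K → Fin L → F)
    (V1 : Finset (Fin K)) : Polynomial F :=
  Lagrange.interpolate 𝒮 α
    (fun k => -((∑ ℓ : Fin L, sigmaV w w' V1 ℓ * α k ^ (ℓ : ℕ)) * (α k ^ L)⁻¹))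

/-- The key-shift implementing the translation from inputs `w` to inputs `w'`. -/
noncomputable def tvec (α : Fin K → F) (𝒮 : Finset (Fin K)) (w w' : Fin K → Fin L → F) :
    KeySp F K T L :=
  (fun k => w k - w' k, fun V1 i => (Gpoly α 𝒮 w w' V1).coeff i)

lemma natDegree_Gpoly_lt (α : Fin K → F) (hinj : Function.Injective α)
    {𝒮 : Finset (Fin K)} (h𝒮 : 𝒮.card ≤ T + 1) (w w' : Fin K → Fin L → F)
    (V1 : Finset (Fin K)) : (Gpoly α 𝒮 w w' V1).natDegree < T + 1 := by
  by_cases h0 : Gpoly α 𝒮 w w' V1 = 0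
  · rw [h0]; simp
  · rw [Polynomial.natDegree_lt_iff_degree_lt h0]
    refine lt_of_lt_of_le (Lagrange.degree_interpolate_lt _ hinj.injOn) ?_
    exact_mod_cast h𝒮

lemma share_add_tvec (α : Fin K → F) (hinj : Function.Injective α)
    {𝒮 : Finset (Fin K)} (h𝒮 : 𝒮.card ≤ T + 1) (w w' : Fin K → Fin L → F)
    (V1 : Finset (Fin K)) (k : Fin K) (κ : KeySp F K T L) :
    share α V1 k (κ + tvec α 𝒮 w w') = share α V1 k κ +
      ((∑ ℓ : Fin L, sigmaV w w' V1 ℓ * α k ^ (ℓ : ℕ)) +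
        α k ^ L * (Gpoly α 𝒮 w w' V1).eval (α k)) := by
  have hdeg := natDegree_Gpoly_lt α hinj h𝒮 w w' V1
  have hG : ∑ i : Fin (T + 1), (Gpoly α 𝒮 w w' V1).coeff i * α k ^ (L + (i : ℕ))
      = α k ^ L * (Gpoly α 𝒮 w w' V1).eval (α k) := by
    rw [Polynomial.eval_eq_sum_range' hdeg, Finset.mul_sum,
      ← Fin.sum_univ_eq_sum_range (fun i => α k ^ L * ((Gpoly α 𝒮 w w' V1).coeff i * α k ^ i))]
    refine Finset.sum_congr rfl fun i _ => ?_
    rw [pow_add]; ring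
  have h1 : ∀ ℓ : Fin L, (∑ j ∈ V1, (κ + tvec α 𝒮 w w').1 j) ℓ
      = (∑ j ∈ V1, κ.1 j) ℓ + sigmaV w w' V1 ℓ := by
    intro ℓ
    simp only [Prod.fst_add, Pi.add_apply, tvec, Finset.sum_apply, Pi.sub_apply, sigmaV,
      Finset.sum_add_distrib]
  have h2 : ∀ i, (κ + tvec α 𝒮 w w').2 V1 i = κ.2 V1 i + (Gpoly α 𝒮 w w' V1).coeff i := by
    intro i
    simp [tvec]
  unfold share
  simp only [h1, h2, add_mul, Finset.sum_add_distrib, hG]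
  ring

lemma tvec_shift_vanish (α : Fin K → F) (hinj : Function.Injective α)
    (h0 : ∀ k, α k ≠ 0) {𝒮 : Finset (Fin K)} (w w' : Fin K → Fin L → F)
    (V1 : Finset (Fin K)) {k : Fin K} (hk : k ∈ 𝒮) :
    (∑ ℓ : Fin L, sigmaV w w' V1 ℓ * α k ^ (ℓ : ℕ)) +
      α k ^ L * (Gpoly α 𝒮 w w' V1).eval (α k) = 0 := by
  rw [Gpoly, Lagrange.eval_interpolate_at_node _ hinj.injOn hk]
  have hpow : α k ^ L ≠ 0 := pow_ne_zero _ (h0 k)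
  field_simp
  ring

lemma sigmaV_eq_zero {w w' : Fin K → Fin L → F} {V1 : Finset (Fin K)}
    (h : ∑ j ∈ V1, w j = ∑ j ∈ V1, w' j) : sigmaV w w' V1 = 0 := by
  funext ℓ
  have := congrFun h ℓ
  simp only [Finset.sum_apply] at this
  simp [sigmaV, Finset.sum_sub_distrib, this]

lemma Gpoly_eq_zero (α : Fin K → F) (𝒮 : Finset (Fin K)) {w w' : Fin K → Fin L → F}
    {V1 : Finset (Fin K)} (h : sigmaV w w' V1 = 0) : Gpoly α 𝒮 w w' V1 = 0 := by
  have hr : (fun k => -((∑ ℓ : Fin L, sigmaV w w' V1 ℓ * α k ^ (ℓ : ℕ)) * (α k ^ L)⁻¹))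
      = (0 : Fin K → F) := by
    funext k; rw [h]; simp
  rw [Gpoly, hr, map_zero]

lemma tvec_antisymm (α : Fin K → F) (𝒮 : Finset (Fin K)) (w w' : Fin K → Fin L → F) :
    tvec α 𝒮 w' w = - tvec (T := T) (L := L) α 𝒮 w w' := by
  have hσ : ∀ V1 : Finset (Fin K), sigmaV w' w V1 = - sigmaV w w' V1 := by
    intro V1; funext ℓ
    simp [sigmaV, ← Finset.sum_neg_distrib, neg_sub]
  have hG : ∀ V1 : Finset (Fin K), Gpoly α 𝒮 w' w V1 = - Gpoly α 𝒮 w w' V1 := by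
    intro V1
    rw [Gpoly, Gpoly, ← map_neg]
    congr 1
    funext k
    rw [hσ]
    simp only [Pi.neg_apply, neg_mul]
    rw [Finset.sum_neg_distrib]
    ring
  rw [tvec, tvec, Prod.neg_mk]
  refine Prod.ext ?_ ?_
  · funext k; simp [neg_sub]
  · funext V1 i
    simp only [Pi.neg_apply]
    rw [hG, Polynomial.coeff_neg]

/-- The decoder. -/
noncomputable def decoder (α : Fin K → F) (U1 U2 : Finset (Fin K)) (u : Fin K)
    (xs : {k // k ∈ U1.erase u} → Fin L → F) (ys : {k // k ∈ U2.erase u} → Fin 1 → F)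
    (wu : Fin L → F) (zu : (Fin L → F) × (Finset (Fin K) → F)) : Fin L → F :=
  fun i =>
    (∑ k ∈ (U1.erase u).attach, xs k i)
      - (Lagrange.interpolate U2 α (fun k =>
          if k = u then zu.2 U1
          else if hk : k ∈ U2.erase u then ys ⟨k, hk⟩ 0 else 0)).coeff (i : ℕ)
      + zu.1 i + wu i

lemma decoder_correct (α : Fin K → F) (hαinj : Function.Injective α)
    {U1 U2 : Finset (Fin K)} {u : Fin K} (hsub : U2 ⊆ U1) (hu : u ∈ U2)
    (hcard : L + T + 1 ≤ U2.card) (ω : OmegaSp F K T L) :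
    decoder α U1 U2 u (fun k => fun i => ω.1 k.1 i + ω.2.1 k.1 i)
      (fun k => fun _ => share α U1 k.1 ω.2) (ω.1 u)
      (ω.2.1 u, fun V1 => share α V1 u ω.2) = ∑ k ∈ U1, ω.1 k := by
  classical
  have huU1 : u ∈ U1 := hsub hu
  have hrQ : (Lagrange.interpolate U2 α (fun k =>
      if k = u then share α U1 u ω.2
      else if hk : k ∈ U2.erase u then share α U1 k ω.2 else 0))
      = Qpoly U1 ω.2 := by
    have hQd : (Qpoly U1 ω.2).degree < (U2.card : WithBot ℕ) :=
      lt_of_lt_of_le (degree_Qpoly_lt U1 ω.2) (by exact_mod_cast hcard)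
    refine Eq.symm ?_
    refine Lagrange.eq_interpolate_of_eval_eq _ hαinj.injOn hQd fun k hk => ?_
    by_cases hku : k = u
    · rw [if_pos hku, hku, share_eq_eval]
    · rw [if_neg hku, dif_pos (Finset.mem_erase.mpr ⟨hku, hk⟩), share_eq_eval]
  funext i
  simp only [decoder, hrQ, Qpoly_coeff U1 ω.2 i]
  rw [Finset.sum_attach (U1.erase u) (fun k => ω.1 k i + ω.2.1 k i)]
  rw [Finset.sum_apply, Finset.sum_apply]
  rw [← Finset.sum_erase_add U1 (fun j => ω.2.1 j i) huU1,
    ← Finset.sum_erase_add U1 (fun j => ω.1 j i) huU1,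
    Finset.sum_add_distrib]
  ring

end DSAAux

namespace DSAAux

open Polynomial

section SchemeDef

variable (F : Type) [Field F] [Fintype F]

lemma unif_eval_fiber (K T L : ℕ) (k : Fin K) (a : Fin L → F) :
    unif (OmegaSp F K T L) ((fun ω : OmegaSp F K T L => ω.1 k) ⁻¹' {a})
      = ((Fintype.card (Fin L → F) : ℝ≥0∞))⁻¹ := by
  classical
  have hset : ((fun ω : OmegaSp F K T L => ω.1 k) ⁻¹' {a})
      = {w : Fin K → Fin L → F | w k = a} ×ˢ (Set.univ : Set (KeySp F K T L)) := by
    ext ω; exact ⟨fun h => ⟨h, trivial⟩, fun h => h.1⟩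
  rw [hset, unif_apply, ncard_prod, ncard_pi_fiber (fun _ : Fin K => Fin L → F) k a,
    Set.ncard_univ, Nat.card_eq_fintype_card]
  have hcard : Fintype.card (OmegaSp F K T L)
      = Fintype.card (Fin L → F) *
        (Fintype.card (∀ j : {j : Fin K // j ≠ k}, Fin L → F)
          * Fintype.card (KeySp F K T L)) := by
    rw [Fintype.card_prod, card_pi_split (fun _ : Fin K => Fin L → F) k]
    ring
  rw [hcard]
  exact ennreal_helper Fintype.card_ne_zero
    (Nat.mul_ne_zero Fintype.card_ne_zero Fintype.card_ne_zero)

lemma unif_indepW (K T L : ℕ) (a : Fin K → Fin L → F) :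
    unif (OmegaSp F K T L) (⋂ i, (fun ω : OmegaSp F K T L => ω.1 i) ⁻¹' {a i})
      = ∏ i : Fin K,
          unif (OmegaSp F K T L) ((fun ω : OmegaSp F K T L => ω.1 i) ⁻¹' {a i}) := by
  classical
  have h1 : (⋂ i, (fun ω : OmegaSp F K T L => ω.1 i) ⁻¹' {a i})
      = (Prod.fst ⁻¹' {a} : Set (OmegaSp F K T L)) := by
    ext ω
    simp [Set.mem_iInter, funext_iff]
  rw [h1, unif_apply, ncard_fst_fiber]
  rw [Finset.prod_congr rfl (fun i _ => unif_eval_fiber F K T L i (a i)),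
    Finset.prod_const, Finset.card_univ, Fintype.card_fin]
  rw [show Fintype.card (OmegaSp F K T L)
      = Fintype.card (Fin K → Fin L → F) * Fintype.card (KeySp F K T L)
    from Fintype.card_prod _ _,
    ennreal_helper Fintype.card_ne_zero Fintype.card_ne_zero]
  rw [← ENNReal.inv_pow]
  congr 1
  rw [← Nat.cast_pow]
  congr 1
  rw [Fintype.card_fun, Fintype.card_fin]

lemma unif_indepWZ (K T L : ℕ) (α : Fin K → F) (a : Fin K → Fin L → F)
    (z : Fin K → (Fin L → F) × (Finset (Fin K) → F)) :
    unif (OmegaSp F K T L)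
      ((fun ω : OmegaSp F K T L => fun k => ω.1 k) ⁻¹' {a}
        ∩ (fun ω : OmegaSp F K T L =>
            fun k => (ω.2.1 k, fun V1 => share α V1 k ω.2)) ⁻¹' {z})
      = unif (OmegaSp F K T L) ((fun ω : OmegaSp F K T L => fun k => ω.1 k) ⁻¹' {a})
        * unif (OmegaSp F K T L) ((fun ω : OmegaSp F K T L =>
            fun k => (ω.2.1 k, fun V1 => share α V1 k ω.2)) ⁻¹' {z}) := by
  classical
  set SZ : Set (KeySp F K T L) :=
    {κ | (fun k => (κ.1 k, fun V1 => share α V1 k κ)) = z} with hSZ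
  have hA : ((fun ω : OmegaSp F K T L => fun k => ω.1 k) ⁻¹' {a})
      = (Prod.fst ⁻¹' {a} : Set (OmegaSp F K T L)) := rfl
  have hB : ((fun ω : OmegaSp F K T L =>
        fun k => (ω.2.1 k, fun V1 => share α V1 k ω.2)) ⁻¹' {z})
      = (Prod.snd ⁻¹' SZ : Set (OmegaSp F K T L)) := rfl
  have hAB : (Prod.fst ⁻¹' {a} : Set (OmegaSp F K T L)) ∩ Prod.snd ⁻¹' SZ
      = ({a} : Set (Fin K → Fin L → F)) ×ˢ SZ := by
    ext ω; exact ⟨fun h => ⟨h.1, h.2⟩, fun h => ⟨h.1, h.2⟩⟩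
  rw [hA, hB, hAB, unif_apply, unif_apply, unif_apply, ncard_prod, ncard_fst_fiber,
    ncard_snd_fiber, Set.ncard_singleton, one_mul]
  have hone : (Fintype.card (Fin K → Fin L → F) : ℝ≥0∞)
      * (Fintype.card (KeySp F K T L) : ℝ≥0∞)
      * ((Fintype.card (OmegaSp F K T L) : ℝ≥0∞))⁻¹ = 1 := by
    rw [show (Fintype.card (OmegaSp F K T L) : ℝ≥0∞)
        = (Fintype.card (Fin K → Fin L → F) : ℝ≥0∞)
          * (Fintype.card (KeySp F K T L) : ℝ≥0∞) by
      rw [Fintype.card_prod]; push_cast; ring]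
    exact ENNReal.mul_inv_cancel
      (by
        have h1 : Fintype.card (Fin K → Fin L → F) ≠ 0 := Fintype.card_ne_zero
        have h2 : Fintype.card (KeySp F K T L) ≠ 0 := Fintype.card_ne_zero
        exact mul_ne_zero (by exact_mod_cast h1) (by exact_mod_cast h2))
      (ENNReal.mul_ne_top (ENNReal.natCast_ne_top _) (ENNReal.natCast_ne_top _))
  rw [Nat.cast_mul]
  set D := ((Fintype.card (OmegaSp F K T L) : ℝ≥0∞))⁻¹
  calc (SZ.ncard : ℝ≥0∞) * D
      = (SZ.ncard : ℝ≥0∞) * D * 1 := by rw [mul_one]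
    _ = (SZ.ncard : ℝ≥0∞) * D * ((Fintype.card (Fin K → Fin L → F) : ℝ≥0∞)
          * (Fintype.card (KeySp F K T L) : ℝ≥0∞) * D) := by rw [hone]
    _ = (Fintype.card (KeySp F K T L) : ℝ≥0∞) * D
          * ((Fintype.card (Fin K → Fin L → F) : ℝ≥0∞) * (SZ.ncard : ℝ≥0∞) * D) := by
        ring

/-- The concrete two-round DSA scheme. -/
noncomputable def scheme (K U T L : ℕ) (α : Fin K → F) : DSAScheme F K U L L 1 :=
  { Ω := OmegaSp F K T L
    mΩ := ⊤
    P := unif (OmegaSp F K T L)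
    probP := inferInstance
    Zt := (Fin L → F) × (Finset (Fin K) → F)
    fZt := inferInstance
    W := fun k ω => ω.1 k
    Z := fun k ω => (ω.2.1 k, fun V1 => share α V1 k ω.2)
    f := fun _ w z i => w i + z.1 i
    g := fun _ V1 _ z _ => z.2 V1
    measW := fun _ _ => MeasurableSpace.measurableSet_top
    measZ := fun _ _ => MeasurableSpace.measurableSet_top
    indepW := fun a => unif_indepW F K T L a
    unifW := fun k a => unif_eval_fiber F K T L k a
    indepWZ := fun a z => unif_indepWZ F K T L α a z }

lemma scheme_correct (K U T L : ℕ) (α : Fin K → F) (hαinj : Function.Injective α)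
    (hL : L + (T + 1) = U) : (scheme F K U T L α).Correct := by
  intro U1 U2 hsub hcard u hu
  refine ⟨decoder α U1 U2 u, ?_⟩
  refine Filter.Eventually.of_forall fun ω => ?_
  exact decoder_correct α hαinj hsub hu (by omega : L + T + 1 ≤ U2.card) ω

lemma scheme_secure (K U T L : ℕ) (α : Fin K → F) (hαinj : Function.Injective α)
    (hα0 : ∀ k, α k ≠ 0) : (scheme F K U T L α).Secure T := by
  classical
  intro U1 hU1 𝒯 h𝒯 u a b c
  have hScard : (insert u 𝒯).card ≤ T + 1 := le_trans (Finset.card_insert_le u 𝒯) (by omega)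
  show unif (OmegaSp F K T L)
      ((fun ω : OmegaSp F K T L =>
        ((fun k : {k : Fin K // k ≠ u} => (fun i => ω.1 k.1 i + ω.2.1 k.1 i : Fin L → F)),
         (fun k : {k : Fin K // k ∈ U1.erase u} => (fun _ : Fin 1 => share α U1 k.1 ω.2)))) ⁻¹' {a} ∩ (fun ω : OmegaSp F K T L => fun k : Fin K => ω.1 k) ⁻¹' {b} ∩ (fun ω : OmegaSp F K T L =>
        ((∑ k ∈ U1, ω.1 k),
         fun k : {k : Fin K // k ∈ insert u 𝒯} =>
           (ω.1 k.1, (ω.2.1 k.1, fun V1 => share α V1 k.1 ω.2)))) ⁻¹' {c})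
    * unif (OmegaSp F K T L) ((fun ω : OmegaSp F K T L =>
        ((∑ k ∈ U1, ω.1 k),
         fun k : {k : Fin K // k ∈ insert u 𝒯} =>
           (ω.1 k.1, (ω.2.1 k.1, fun V1 => share α V1 k.1 ω.2)))) ⁻¹' {c})
    = unif (OmegaSp F K T L) ((fun ω : OmegaSp F K T L =>
        ((fun k : {k : Fin K // k ≠ u} => (fun i => ω.1 k.1 i + ω.2.1 k.1 i : Fin L → F)),
         (fun k : {k : Fin K // k ∈ U1.erase u} => (fun _ : Fin 1 => share α U1 k.1 ω.2)))) ⁻¹' {a} ∩ (fun ω : OmegaSp F K T L =>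
        ((∑ k ∈ U1, ω.1 k),
         fun k : {k : Fin K // k ∈ insert u 𝒯} =>
           (ω.1 k.1, (ω.2.1 k.1, fun V1 => share α V1 k.1 ω.2)))) ⁻¹' {c})
    * unif (OmegaSp F K T L) ((fun ω : OmegaSp F K T L => fun k : Fin K => ω.1 k) ⁻¹' {b} ∩ (fun ω : OmegaSp F K T L =>
        ((∑ k ∈ U1, ω.1 k),
         fun k : {k : Fin K // k ∈ insert u 𝒯} =>
           (ω.1 k.1, (ω.2.1 k.1, fun V1 => share α V1 k.1 ω.2)))) ⁻¹' {c})
  set CW : Set (Fin K → Fin L → F) :=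
    {w | ∑ k ∈ U1, w k = c.1 ∧ ∀ k : {k // k ∈ insert u 𝒯}, w k.1 = (c.2 k).1} with hCWdef
  set CK : Set (KeySp F K T L) :=
    {κ | ∀ k : {k // k ∈ insert u 𝒯}, (κ.1 k.1, fun V1 => share α V1 k.1 κ) = (c.2 k).2}
    with hCKdef
  set AK : (Fin K → Fin L → F) → Set (KeySp F K T L) := fun w =>
    {κ | (∀ k : {k : Fin K // k ≠ u}, (fun i => w k.1 i + κ.1 k.1 i) = a.1 k) ∧
      (∀ k : {k // k ∈ U1.erase u}, (fun _ : Fin 1 => share α U1 k.1 κ) = a.2 k)}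
    with hAKdef
  have hA : ((fun ω : OmegaSp F K T L =>
        ((fun k : {k : Fin K // k ≠ u} => (fun i => ω.1 k.1 i + ω.2.1 k.1 i : Fin L → F)),
         (fun k : {k : Fin K // k ∈ U1.erase u} => (fun _ : Fin 1 => share α U1 k.1 ω.2)))) ⁻¹' {a})
      = {ω : OmegaSp F K T L | ω.2 ∈ AK ω.1} := by
    ext ω
    constructor
    · intro h
      exact ⟨fun k => congrFun (congrArg Prod.fst h) k,
        fun k => congrFun (congrArg Prod.snd h) k⟩
    · intro h
      exact Prod.ext (funext h.1) (funext h.2)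
  have hB : ((fun ω : OmegaSp F K T L => fun k : Fin K => ω.1 k) ⁻¹' {b})
      = (Prod.fst ⁻¹' {b} : Set (OmegaSp F K T L)) := rfl
  have hC : ((fun ω : OmegaSp F K T L =>
        ((∑ k ∈ U1, ω.1 k),
         fun k : {k : Fin K // k ∈ insert u 𝒯} =>
           (ω.1 k.1, (ω.2.1 k.1, fun V1 => share α V1 k.1 ω.2)))) ⁻¹' {c})
      = {ω : OmegaSp F K T L | ω.1 ∈ CW ∧ ω.2 ∈ CK} := by
    ext ω
    constructor
    · intro h
      have h1 : ∑ k ∈ U1, ω.1 k = c.1 := congrArg Prod.fst h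
      have h2 : ∀ k : {k // k ∈ insert u 𝒯},
          (ω.1 k.1, (ω.2.1 k.1, fun V1 => share α V1 k.1 ω.2)) = c.2 k :=
        fun k => congrFun (congrArg Prod.snd h) k
      exact ⟨⟨h1, fun k => congrArg Prod.fst (h2 k)⟩, fun k => congrArg Prod.snd (h2 k)⟩
    · rintro ⟨⟨h1, h2⟩, h3⟩
      exact Prod.ext h1 (funext fun k => Prod.ext (h2 k) (h3 k))
  have hshift : ∀ w ∈ CW, ∀ w' ∈ CW, ∀ κ : KeySp F K T L,
      κ ∈ AK w ∩ CK → κ + tvec α (insert u 𝒯) w w' ∈ AK w' ∩ CK := by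
    rintro w hw w' hw' κ ⟨⟨hA1, hA2⟩, hCK1⟩
    have hσU1 : sigmaV w w' U1 = 0 := sigmaV_eq_zero (hw.1.trans hw'.1.symm)
    have hGU1 : Gpoly α (insert u 𝒯) w w' U1 = 0 := Gpoly_eq_zero α (insert u 𝒯) hσU1
    have hzeroU1 : ∀ k : Fin K,
        (∑ ℓ : Fin L, sigmaV w w' U1 ℓ * α k ^ (ℓ : ℕ))
          + α k ^ L * (Gpoly α (insert u 𝒯) w w' U1).eval (α k) = 0 := by
      intro k; rw [hσU1, hGU1]; simp
    refine ⟨⟨fun k => ?_, fun k => ?_⟩, fun k => ?_⟩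
    · funext i
      have h := congrFun (hA1 k) i
      show w' k.1 i + (κ.1 k.1 i + (w k.1 i - w' k.1 i)) = a.1 k i
      linear_combination h
    · funext j
      have h := congrFun (hA2 k) j
      show share α U1 k.1 (κ + tvec α (insert u 𝒯) w w') = a.2 k j
      rw [share_add_tvec α hαinj hScard, hzeroU1, add_zero]
      exact h
    · have hkS : k.1 ∈ insert u 𝒯 := k.2
      have h := hCK1 k
      have hδ0 : w k.1 = w' k.1 := (hw.2 k).trans (hw'.2 k).symm
      refine Eq.trans ?_ h
      refine Prod.ext ?_ ?_
      · show κ.1 k.1 + (w k.1 - w' k.1) = κ.1 k.1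
        rw [hδ0]; simp
      · funext V1
        show share α V1 k.1 (κ + tvec α (insert u 𝒯) w w') = share α V1 k.1 κ
        rw [share_add_tvec α hαinj hScard,
          tvec_shift_vanish α hαinj hα0 w w' V1 hkS, add_zero]
  rw [hA, hB, hC]
  refine unif_mul_eq_mul ?_
  by_cases hb : b ∈ CW
  · have e1 : {ω : OmegaSp F K T L | ω.2 ∈ AK ω.1} ∩ Prod.fst ⁻¹' {b}
        ∩ {ω : OmegaSp F K T L | ω.1 ∈ CW ∧ ω.2 ∈ CK}
        = ({b} : Set (Fin K → Fin L → F)) ×ˢ (AK b ∩ CK) := by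
      ext ω
      constructor
      · rintro ⟨⟨h1, h2⟩, h3, h4⟩
        exact ⟨h2, h2 ▸ h1, h4⟩
      · rintro ⟨h2, h1, h4⟩
        have h2' : ω.1 = b := h2
        refine ⟨⟨?_, h2⟩, ?_, h4⟩
        · show ω.2 ∈ AK ω.1
          rw [h2']; exact h1
        · show ω.1 ∈ CW
          rw [h2']; exact hb
    have e2 : {ω : OmegaSp F K T L | ω.1 ∈ CW ∧ ω.2 ∈ CK} = CW ×ˢ CK := rfl
    have e3 : {ω : OmegaSp F K T L | ω.2 ∈ AK ω.1}
        ∩ {ω : OmegaSp F K T L | ω.1 ∈ CW ∧ ω.2 ∈ CK}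
        = {p : (Fin K → Fin L → F) × KeySp F K T L | p.1 ∈ CW ∧ p.2 ∈ AK p.1 ∩ CK} := by
      ext ω
      exact ⟨fun h => ⟨h.2.1, h.1, h.2.2⟩, fun h => ⟨h.2.1, h.1, h.2.2⟩⟩
    have e4 : (Prod.fst ⁻¹' {b} : Set (OmegaSp F K T L))
        ∩ {ω : OmegaSp F K T L | ω.1 ∈ CW ∧ ω.2 ∈ CK}
        = ({b} : Set (Fin K → Fin L → F)) ×ˢ CK := by
      ext ω
      constructor
      · rintro ⟨h2, h3, h4⟩
        exact ⟨h2, h4⟩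
      · rintro ⟨h2, h4⟩
        have h2' : ω.1 = b := h2
        refine ⟨h2, ?_, h4⟩
        show ω.1 ∈ CW
        rw [h2']; exact hb
    have e5 : {p : (Fin K → Fin L → F) × KeySp F K T L
        | p.1 ∈ CW ∧ p.2 ∈ AK p.1 ∩ CK}.ncard = CW.ncard * (AK b ∩ CK).ncard := by
      refine ncard_dep_prod CW (fun w => AK w ∩ CK) (AK b ∩ CK)
        (fun w => Equiv.addRight (tvec α (insert u 𝒯) b w)) ?_
      intro w hw y
      simp only [Equiv.coe_addRight]
      constructor
      · exact fun hy => hshift b hb w hw y hy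
      · intro hy
        have h5 := hshift w hw b hb _ hy
        rwa [tvec_antisymm α (insert u 𝒯) b w, add_neg_cancel_right] at h5
    rw [e1, e3, e4, e2, e5, ncard_prod, ncard_prod, ncard_prod, Set.ncard_singleton]
    ring
  · have e1 : {ω : OmegaSp F K T L | ω.2 ∈ AK ω.1} ∩ Prod.fst ⁻¹' {b}
        ∩ {ω : OmegaSp F K T L | ω.1 ∈ CW ∧ ω.2 ∈ CK} = ∅ := by
      ext ω
      simp only [Set.mem_inter_iff, Set.mem_empty_iff_false, iff_false]
      rintro ⟨⟨h1, h2⟩, h3, h4⟩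
      have h2' : ω.1 = b := h2
      exact hb (h2' ▸ h3)
    have e4 : (Prod.fst ⁻¹' {b} : Set (OmegaSp F K T L))
        ∩ {ω : OmegaSp F K T L | ω.1 ∈ CW ∧ ω.2 ∈ CK} = ∅ := by
      ext ω
      simp only [Set.mem_inter_iff, Set.mem_empty_iff_false, iff_false]
      rintro ⟨h2, h3, h4⟩
      have h2' : ω.1 = b := h2
      exact hb (h2' ▸ h3)
    rw [e1, e4]
    simp

end SchemeDef

end DSAAux

/-- **Achievability for decentralized secure aggregation.**
For a finite field `F` with `q > K` elements, `K ≥ 3` and `T + 1 < U ≤ K - 1`, there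
exists a two-round DSA scheme with input length `L = U - T - 1`, first-round message
length `L_X = U - T - 1` and second-round message length `L_Y = 1` satisfying both the
correctness constraint and the security constraint with collusion parameter `T`.
Consequently the rate pair `(R₁, R₂) = (1, 1 / (U - T - 1))` is achievable. -/
theorem dsa_achievability
    (F : Type) [Field F] [Fintype F] (q K U T : ℕ)
    (hq : Fintype.card F = q)
    (hK : 3 ≤ K) (hTU : T + 1 < U) (hUK : U ≤ K - 1) (hqK : q > K) :
    ∃ 𝓢 : DSAScheme F K U (U - T - 1) (U - T - 1) 1, 𝓢.Correct ∧ 𝓢.Secure T := by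
  classical
  obtain ⟨em⟩ : Nonempty (Fin K ↪ {x : F // x ≠ 0}) := by
    rw [Function.Embedding.nonempty_iff_card_le, Fintype.card_fin]
    have h1 : Fintype.card {x : F // x ≠ 0} = Fintype.card {x : F // ¬ x = 0} :=
      Fintype.card_congr (Equiv.subtypeEquivRight fun x => Iff.rfl)
    have h2 : Fintype.card {x : F // ¬ x = 0}
        = Fintype.card F - Fintype.card {x : F // x = 0} :=
      Fintype.card_subtype_compl _
    have h3 : Fintype.card {x : F // x = 0} = 1 := Fintype.card_subtype_eq 0
    omega
  exact ⟨DSAAux.scheme F K U T (U - T - 1) (fun k => (em k : F)),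
    DSAAux.scheme_correct F K U T (U - T - 1) _
      (fun x y hxy => em.injective (Subtype.ext hxy)) (by omega),
    DSAAux.scheme_secure F K U T (U - T - 1) _
      (fun x y hxy => em.injective (Subtype.ext hxy)) (fun k => (em k).2)⟩
end

section
/- (Lemma 1 of the paper.) In the key-construction setup, suppose α ∈ F^{U×K} is a (T+1)-private MDS matrix and U > T+1. Then for every subset C ⊆ {1,…,K} with |C| ≤ T+1, the random tuple (N_i)_{i∈{1,…,K}\C} is independent of the random tuple ((N_k, ([Q_i]_k)_{i∈{1,…,K}}))_{k∈C}. -/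
open MeasureTheory Finset
open scoped ENNReal

/-- `α ∈ F^{U×K}` is an MDS matrix: every `U×U` submatrix formed by `U` distinct
columns is invertible. -/
def IsMDS {F : Type*} [Field F] {U K : ℕ} (α : Matrix (Fin U) (Fin K) F) : Prop :=
  ∀ c : Fin U → Fin K, Function.Injective c →
    (Matrix.of fun i j : Fin U => α i (c j)).det ≠ 0

/-- `α ∈ F^{U×K}` is a `(T+1)`-private MDS matrix: it is MDS, and in addition every
`(T+1)×(T+1)` submatrix formed by `T+1` distinct columns of its last `T+1` rows is
invertible. -/
def IsPrivateMDS {F : Type*} [Field F] {U K : ℕ} (T : ℕ) (hTU : T + 1 ≤ U)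
    (α : Matrix (Fin U) (Fin K) F) : Prop :=
  IsMDS α ∧
    ∀ c : Fin (T + 1) → Fin K, Function.Injective c →
      (Matrix.of fun i j : Fin (T + 1) =>
        α ⟨U - (T + 1) + i.1, by have := i.isLt; omega⟩ (c j)).det ≠ 0

/-- The scalar share `[Q_i]_k`: the inner product of the concatenated row vector
`(N_i, S_i) ∈ F^U` with the `k`-th column of `α`. -/
def share {F : Type*} [Field F] {U K T : ℕ} (h : U - T - 1 + (T + 1) = U)
    (α : Matrix (Fin U) (Fin K) F)
    (n : Fin (U - T - 1) → F) (s : Fin (T + 1) → F) (k : Fin K) : F :=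
  ∑ j : Fin U, Fin.append n s (Fin.cast h.symm j) * α j k

/-! ### Auxiliary counting lemmas -/

lemma nat_card_sigma {ι : Type*} [Fintype ι] (β : ι → Type*) [∀ i, Finite (β i)] :
    Nat.card (Σ i, β i) = ∑ i, Nat.card (β i) := by
  classical
  letI := fun i => Fintype.ofFinite (β i)
  simp [Nat.card_eq_fintype_card, Fintype.card_sigma]

lemma fiber_card_eq_ker' {G H : Type*} [AddCommGroup G] [AddCommGroup H]
    (f : G →+ H) (y : H) (hy : ∃ x, f x = y) :
    Nat.card {x : G // f x = y} = Nat.card f.ker := by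
  obtain ⟨x₀, hx₀⟩ := hy
  refine Nat.card_congr ⟨fun x => ⟨x.1 - x₀, ?_⟩, fun k => ⟨x₀ + k.1, ?_⟩, ?_, ?_⟩
  · simp [AddMonoidHom.mem_ker, map_sub, x.2, hx₀]
  · have := k.2
    simp only [AddMonoidHom.mem_ker] at this
    simp [map_add, hx₀, this]
  · intro x; ext; simp
  · intro k; ext; simp

lemma card_cond {ι V W : Type*} [Fintype ι] [Finite V] [Finite W] (Q : ι → V → W → Prop) :
    Nat.card {x : (ι → V) × (ι → W) // ∀ i, Q i (x.1 i) (x.2 i)} =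
      ∏ i, Nat.card {p : V × W // Q i p.1 p.2} := by
  rw [← Nat.card_pi]
  exact Nat.card_congr
    ⟨fun x => fun i => ⟨(x.1.1 i, x.1.2 i), x.2 i⟩,
     fun y => ⟨(fun i => (y i).1.1, fun i => (y i).1.2), fun i => (y i).2⟩,
     fun x => rfl, fun y => rfl⟩

lemma card_fst_fixed {V W : Type*} (n₀ : V) (R : V → W → Prop) :
    Nat.card {p : V × W // p.1 = n₀ ∧ R p.1 p.2} = Nat.card {s : W // R n₀ s} := by
  refine Nat.card_congr ⟨fun p => ⟨p.1.2, ?_⟩, fun s => ⟨(n₀, s.1), rfl, s.2⟩, ?_, ?_⟩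
  · obtain ⟨⟨n, s⟩, h1, h2⟩ := p; subst h1; exact h2
  · rintro ⟨⟨n, s⟩, h1, h2⟩; subst h1; rfl
  · intro s; rfl

lemma card_snd_cond {V W : Type*} [Fintype V] [Finite W] (R : V → W → Prop) :
    Nat.card {p : V × W // R p.1 p.2} = ∑ n : V, Nat.card {s : W // R n s} := by
  rw [← nat_card_sigma]
  exact Nat.card_congr
    ⟨fun p => ⟨p.1.1, p.1.2, p.2⟩, fun x => ⟨(x.1, x.2.1), x.2.2⟩,
     fun _ => rfl, fun x => rfl⟩

/-! ### Measure of preimages via counting -/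

lemma measure_preimage_eq_card {Ω X : Type*} [MeasurableSpace Ω] [Fintype X]
    (P : Measure Ω) [IsProbabilityMeasure P] (Φ : Ω → X)
    (hΦ : ∀ x : X, P (Φ ⁻¹' {x}) = (Fintype.card X : ℝ≥0∞)⁻¹)
    (E : Set X) :
    P (Φ ⁻¹' E) = (Nat.card E : ℝ≥0∞) * (Fintype.card X : ℝ≥0∞)⁻¹ := by
  classical
  set M : ℝ≥0∞ := (Fintype.card X : ℝ≥0∞) with hM
  have hMne : M ≠ 0 := by
    simp [hM]
    intro h
    have : IsEmpty X := Fintype.card_eq_zero_iff.mp h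
    have h1 : P (Φ ⁻¹' (∅ : Set X)) = 1 := by
      rw [show Φ ⁻¹' (∅ : Set X) = Set.univ from by
        ext ω; simp; exact (this.false (Φ ω)).elim]
      simp
    simp at h1
  have hMtop : M ≠ ⊤ := by simp [hM]
  have key : ∀ E' : Set X, P (Φ ⁻¹' E') ≤ (Nat.card E' : ℝ≥0∞) * M⁻¹ := by
    intro E'
    have hcov : Φ ⁻¹' E' = ⋃ x ∈ E'.toFinset, Φ ⁻¹' {x} := by
      ext ω; simp
    rw [hcov]
    calc P (⋃ x ∈ E'.toFinset, Φ ⁻¹' {x}) ≤ ∑ x ∈ E'.toFinset, P (Φ ⁻¹' {x}) :=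
          measure_biUnion_finset_le _ _
      _ = (Nat.card E' : ℝ≥0∞) * M⁻¹ := by
          simp [hΦ, Nat.card_eq_fintype_card, Set.toFinset_card, mul_comm]
  have hsum : (Nat.card E : ℝ≥0∞) * M⁻¹ + (Nat.card ↥Eᶜ : ℝ≥0∞) * M⁻¹ = 1 := by
    rw [← add_mul]
    have : (Nat.card E : ℝ≥0∞) + (Nat.card ↥Eᶜ : ℝ≥0∞) = M := by
      rw [hM]
      norm_cast
      simp only [Nat.card_eq_fintype_card, Fintype.card_subtype]
      have hfc : Finset.filter (Membership.mem Eᶜ) Finset.univ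
          = (Finset.filter (Membership.mem E) Finset.univ)ᶜ := by
        ext x; simp
      rw [hfc, Finset.card_add_card_compl]
    rw [this, ENNReal.mul_inv_cancel hMne hMtop]
  have hone : (1 : ℝ≥0∞) ≤ P (Φ ⁻¹' E) + P (Φ ⁻¹' Eᶜ) := by
    have : (Set.univ : Set Ω) = Φ ⁻¹' E ∪ Φ ⁻¹' Eᶜ := by
      ext ω; simp [em]
    calc (1 : ℝ≥0∞) = P Set.univ := by simp
      _ = P (Φ ⁻¹' E ∪ Φ ⁻¹' Eᶜ) := by rw [← this]
      _ ≤ _ := measure_union_le _ _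
  have h1 := key E
  have h2 := key Eᶜ
  refine le_antisymm h1 ?_
  by_contra hlt
  push_neg at hlt
  have : P (Φ ⁻¹' E) + P (Φ ⁻¹' Eᶜ) < 1 := by
    calc P (Φ ⁻¹' E) + P (Φ ⁻¹' Eᶜ)
        < (Nat.card E : ℝ≥0∞) * M⁻¹ + (Nat.card ↥Eᶜ : ℝ≥0∞) * M⁻¹ := by
          exact ENNReal.add_lt_add_of_lt_of_le (measure_ne_top P _) hlt h2
      _ = 1 := hsum
  exact absurd hone (not_le.mpr this)

/-! ### Splitting a share into its `N`-part and `S`-part -/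

lemma share_split {F : Type*} [Field F] {U K T : ℕ} (h : U - T - 1 + (T + 1) = U)
    (α : Matrix (Fin U) (Fin K) F) (n : Fin (U - T - 1) → F) (s : Fin (T + 1) → F)
    (k : Fin K) :
    share h α n s k =
      (∑ j : Fin (U - T - 1), n j * α (Fin.cast h (Fin.castAdd (T + 1) j)) k)
      + ∑ j : Fin (T + 1), s j * α (Fin.cast h (Fin.natAdd (U - T - 1) j)) k := by
  unfold share
  rw [← Fintype.sum_equiv (finCongr h)
    (fun j : Fin (U - T - 1 + (T + 1)) => Fin.append n s j * α (Fin.cast h j) k)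
    (fun j : Fin U => Fin.append n s (Fin.cast h.symm j) * α j k)
    (fun j => by simp)]
  rw [Fin.sum_univ_add]
  simp [Fin.append_left, Fin.append_right]

lemma L_surj {F : Type*} [Field F] {K U T : ℕ}
    (hTU : T + 1 ≤ U) (hUK : U ≤ K) (h : U - T - 1 + (T + 1) = U)
    (α : Matrix (Fin U) (Fin K) F)
    (hα2 : ∀ c : Fin (T + 1) → Fin K, Function.Injective c →
      (Matrix.of fun i j : Fin (T + 1) =>
        α ⟨U - (T + 1) + i.1, by have := i.isLt; omega⟩ (c j)).det ≠ 0)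
    (C : Finset (Fin K)) (hC : C.card ≤ T + 1)
    (v : {k : Fin K // k ∈ C} → F) :
    ∃ s : Fin (T + 1) → F, ∀ k : {k : Fin K // k ∈ C},
      ∑ j : Fin (T + 1), s j * α (Fin.cast h (Fin.natAdd (U - T - 1) j)) k.1 = v k := by
  classical
  obtain ⟨D, hCD, hDcard⟩ := Finset.exists_superset_card_eq hC
    (by simp only [Fintype.card_fin]; omega)
  let e : Fin (T + 1) ≃ {x // x ∈ D} := (D.equivFin.trans (finCongr hDcard)).symm
  let c' : Fin (T + 1) → Fin K := fun j => (e j).1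
  have hc'inj : Function.Injective c' := fun a b hab => e.injective (Subtype.ext hab)
  have hdet := hα2 c' hc'inj
  let B : Matrix (Fin (T + 1)) (Fin (T + 1)) F :=
    fun j' j => α ⟨U - (T + 1) + j.1, by have := j.isLt; omega⟩ (c' j')
  have hdetB : B.det ≠ 0 := by
    have : B = (Matrix.of fun i j : Fin (T + 1) =>
        α ⟨U - (T + 1) + i.1, by have := i.isLt; omega⟩ (c' j)).transpose := rfl
    rw [this, Matrix.det_transpose]
    exact hdet
  set w : Fin (T + 1) → F := fun j' => if hk : c' j' ∈ C then v ⟨c' j', hk⟩ else 0 with hw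
  refine ⟨B⁻¹.mulVec w, ?_⟩
  have hBs : B.mulVec (B⁻¹.mulVec w) = w := by
    rw [Matrix.mulVec_mulVec, Matrix.mul_nonsing_inv _ (isUnit_iff_ne_zero.mpr hdetB),
      Matrix.one_mulVec]
  intro k
  have hkD : k.1 ∈ D := hCD k.2
  set j' := e.symm ⟨k.1, hkD⟩ with hj'
  have hcj' : c' j' = k.1 := by simp [c', hj']
  have hidx : ∀ j : Fin (T + 1),
      (Fin.cast h (Fin.natAdd (U - T - 1) j)) =
        (⟨U - (T + 1) + j.1, by have := j.isLt; omega⟩ : Fin U) := by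
    intro j; apply Fin.ext; simp; omega
  calc ∑ j : Fin (T + 1), B⁻¹.mulVec w j * α (Fin.cast h (Fin.natAdd (U - T - 1) j)) k.1
      = ∑ j : Fin (T + 1), B j' j * B⁻¹.mulVec w j := by
        apply Finset.sum_congr rfl
        intro j _
        rw [hidx j, mul_comm]
        show α ⟨U - (T + 1) + j.1, _⟩ (k.1) * _ = α ⟨U - (T + 1) + j.1, _⟩ (c' j') * _
        rw [hcj']
    _ = B.mulVec (B⁻¹.mulVec w) j' := by simp [Matrix.mulVec, dotProduct]
    _ = w j' := by rw [hBs]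
    _ = v k := by
        rw [hw]
        simp only [hcj']
        rw [dif_pos k.2]

lemma fiber_count {F : Type*} [Field F] {K U T : ℕ}
    (hTU : T + 1 ≤ U) (hUK : U ≤ K) (h : U - T - 1 + (T + 1) = U)
    (α : Matrix (Fin U) (Fin K) F)
    (hα2 : ∀ c : Fin (T + 1) → Fin K, Function.Injective c →
      (Matrix.of fun i j : Fin (T + 1) =>
        α ⟨U - (T + 1) + i.1, by have := i.isLt; omega⟩ (c j)).det ≠ 0)
    (C : Finset (Fin K)) (hC : C.card ≤ T + 1)
    (n : Fin (U - T - 1) → F) (v : {k : Fin K // k ∈ C} → F) :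
    Nat.card {s : Fin (T + 1) → F // ∀ k : {k : Fin K // k ∈ C}, share h α n s k.1 = v k}
      = Nat.card {s : Fin (T + 1) → F // ∀ k : {k : Fin K // k ∈ C},
          ∑ j : Fin (T + 1), s j * α (Fin.cast h (Fin.natAdd (U - T - 1) j)) k.1 = 0} := by
  classical
  set Lf : (Fin (T + 1) → F) → ({k : Fin K // k ∈ C} → F) :=
    fun s k => ∑ j : Fin (T + 1), s j * α (Fin.cast h (Fin.natAdd (U - T - 1) j)) k.1
    with hLf
  let L : (Fin (T + 1) → F) →+ ({k : Fin K // k ∈ C} → F) :=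
    AddMonoidHom.mk' Lf (by
      intro a b; funext k
      simp [hLf, add_mul, Finset.sum_add_distrib])
  have hL : ∀ s, L s = Lf s := fun _ => rfl
  set cn : {k : Fin K // k ∈ C} → F :=
    fun k => ∑ j : Fin (U - T - 1), n j * α (Fin.cast h (Fin.castAdd (T + 1) j)) k.1 with hcn
  have h1 : ∀ s : Fin (T + 1) → F,
      (∀ k : {k : Fin K // k ∈ C}, share h α n s k.1 = v k) ↔ L s = v - cn := by
    intro s
    rw [funext_iff]
    constructor
    · intro hs k
      have h2 := hs k
      rw [share_split] at h2
      simp only [hL, hLf, Pi.sub_apply, hcn]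
      exact eq_sub_of_add_eq' h2
    · intro hs k
      have h2 := hs k
      rw [share_split]
      simp only [hL, hLf, Pi.sub_apply, hcn] at h2
      rw [h2]; ring
  rw [Nat.card_congr (Equiv.subtypeEquivRight h1)]
  have hsurj : ∃ x, L x = v - cn := by
    obtain ⟨s, hs⟩ := L_surj hTU hUK h α hα2 C hC (v - cn)
    exact ⟨s, funext fun k => hs k⟩
  rw [fiber_card_eq_ker' L _ hsurj]
  symm
  apply Nat.card_congr
  exact (Equiv.subtypeEquivRight (by
    intro s
    rw [AddMonoidHom.mem_ker, funext_iff]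
    constructor
    · intro hs k
      have := hs k
      simpa [hL, hLf] using this
    · intro hs k
      simpa [hL, hLf] using hs k)).symm

/-- **Lemma 1 of the paper.**
In the key-construction setup with a `(T+1)`-private MDS matrix `α` and `U > T + 1`,
for every subset `C ⊆ {1, …, K}` with `|C| ≤ T + 1`, the tuple `(N_i)_{i ∉ C}` is
independent of the tuple of keys `((N_k, ([Q_i]_k)_{i ∈ [K]}))_{k ∈ C}`. -/
theorem key_construction_lemma1
    (F : Type) [Field F] [Fintype F] (q K U T : ℕ)
    (hq : Fintype.card F = q) (hTU : T + 1 ≤ U) (hUK : U ≤ K)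
    (Ω : Type) [MeasurableSpace Ω] (P : Measure Ω) [IsProbabilityMeasure P]
    (N : Fin K → Ω → (Fin (U - T - 1) → F))
    (S : Fin K → Ω → (Fin (T + 1) → F))
    (hindep : ∀ (a : Fin K → (Fin (U - T - 1) → F)) (b : Fin K → (Fin (T + 1) → F)),
      P ((⋂ i, N i ⁻¹' {a i}) ∩ ⋂ i, S i ⁻¹' {b i}) =
        (∏ i, P (N i ⁻¹' {a i})) * ∏ i, P (S i ⁻¹' {b i}))
    (hunifN : ∀ i, UniformRV P (N i))
    (hunifS : ∀ i, UniformRV P (S i))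
    (α : Matrix (Fin U) (Fin K) F)
    (hα : IsPrivateMDS T hTU α)
    (C : Finset (Fin K)) (hC : C.card ≤ T + 1)
    (hU : T + 1 < U) :
    IndepRV P
      (fun ω => fun i : {i : Fin K // i ∉ C} => N i.1 ω)
      (fun ω => fun k : {k : Fin K // k ∈ C} =>
        (N k.1 ω, fun i : Fin K => share (by omega) α (N i ω) (S i ω) k.1)) := by
  classical
  intro a b
  have h : U - T - 1 + (T + 1) = U := by omega
  set Φ : Ω → (Fin K → (Fin (U - T - 1) → F)) × (Fin K → (Fin (T + 1) → F)) :=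
    fun ω => (fun i => N i ω, fun i => S i ω) with hΦdef
  -- uniform law of the full tuple
  have hΦ : ∀ x, P (Φ ⁻¹' {x}) =
      (Fintype.card ((Fin K → (Fin (U - T - 1) → F)) × (Fin K → (Fin (T + 1) → F))) : ℝ≥0∞)⁻¹ := by
    rintro ⟨na, sa⟩
    have hset : Φ ⁻¹' {(na, sa)} = (⋂ i, N i ⁻¹' {na i}) ∩ ⋂ i, S i ⁻¹' {sa i} := by
      ext ω
      simp [hΦdef, Prod.ext_iff, funext_iff, Set.mem_iInter]
    rw [hset, hindep na sa]
    simp only [hunifN _ _, hunifS _ _, Finset.prod_const, Finset.card_univ, Fintype.card_fin]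
    rw [← ENNReal.inv_pow, ← ENNReal.inv_pow, ← ENNReal.mul_inv (by simp) (by simp)]
    congr 1
    rw [Fintype.card_prod, Fintype.card_fun, Fintype.card_fun]
    push_cast
    simp [Fintype.card_fin]
  -- the relevant events in value space
  set EA : Set ((Fin K → (Fin (U - T - 1) → F)) × (Fin K → (Fin (T + 1) → F))) :=
    {x | ∀ i : Fin K, ∀ hi : i ∉ C, x.1 i = a ⟨i, hi⟩} with hEA
  set EB : Set ((Fin K → (Fin (U - T - 1) → F)) × (Fin K → (Fin (T + 1) → F))) :=
    {x | ∀ i : Fin K, (∀ hi : i ∈ C, x.1 i = (b ⟨i, hi⟩).1) ∧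
        ∀ k : {k : Fin K // k ∈ C}, share h α (x.1 i) (x.2 i) k.1 = (b k).2 i} with hEB
  have hfA : (fun ω => fun i : {i : Fin K // i ∉ C} => N i.1 ω) ⁻¹' {a} = Φ ⁻¹' EA := by
    ext ω
    simp only [Set.mem_preimage, Set.mem_singleton_iff]
    constructor
    · intro hω i hi
      exact congrFun hω ⟨i, hi⟩
    · intro hω
      funext i
      exact hω i.1 i.2
  have hfB : (fun ω => fun k : {k : Fin K // k ∈ C} =>
      (N k.1 ω, fun i : Fin K => share (by omega : U - T - 1 + (T + 1) = U) α (N i ω) (S i ω) k.1)) ⁻¹' {b}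
      = Φ ⁻¹' EB := by
    ext ω
    simp only [Set.mem_preimage, Set.mem_singleton_iff]
    constructor
    · intro hω i
      refine ⟨fun hi => congrArg Prod.fst (congrFun hω ⟨i, hi⟩), fun k => ?_⟩
      exact congrFun (congrArg Prod.snd (congrFun hω k)) i
    · intro hω
      funext k
      refine Prod.ext_iff.mpr ⟨(hω k.1).1 k.2, funext fun i => ?_⟩
      exact (hω i).2 k
  rw [hfA, hfB, ← Set.preimage_inter,
    measure_preimage_eq_card P Φ hΦ, measure_preimage_eq_card P Φ hΦ,
    measure_preimage_eq_card P Φ hΦ]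
  -- abbreviations for cardinalities
  set cV : ℕ := Nat.card (Fin (U - T - 1) → F) with hcV
  set cW : ℕ := Nat.card (Fin (T + 1) → F) with hcW
  set t : ℕ := Nat.card {s : Fin (T + 1) → F // ∀ k : {k : Fin K // k ∈ C},
      ∑ j : Fin (T + 1), s j * α (Fin.cast h (Fin.natAdd (U - T - 1) j)) k.1 = 0} with ht
  have hfib : ∀ (n : Fin (U - T - 1) → F) (v : {k : Fin K // k ∈ C} → F),
      Nat.card {s : Fin (T + 1) → F // ∀ k : {k : Fin K // k ∈ C}, share h α n s k.1 = v k}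
        = t := fun n v => fiber_count hTU hUK h α hα.2 C hC n v
  set c : ℕ := C.card with hc
  have hcK : c ≤ K := hc ▸ (le_trans (Finset.card_le_univ C) (by simp))
  -- cardinality of EA
  have hcardA : Nat.card ↥EA = (cV * cW) ^ c * cW ^ (K - c) := by
    have h0 : Nat.card ↥EA = ∏ i : Fin K,
        Nat.card {p : (Fin (U - T - 1) → F) × (Fin (T + 1) → F) //
          ∀ hi : i ∉ C, p.1 = a ⟨i, hi⟩} :=
      card_cond (fun i n s => ∀ hi : i ∉ C, n = a ⟨i, hi⟩)
    rw [h0, ← Finset.prod_mul_prod_compl C]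
    have h1 : ∀ i ∈ C, Nat.card {p : (Fin (U - T - 1) → F) × (Fin (T + 1) → F) //
        ∀ hi : i ∉ C, p.1 = a ⟨i, hi⟩} = cV * cW := by
      intro i hi
      rw [Nat.card_congr (Equiv.subtypeUnivEquiv (fun p hi' => absurd hi hi'))]
      rw [Nat.card_prod]
    have h2 : ∀ i ∈ Cᶜ, Nat.card {p : (Fin (U - T - 1) → F) × (Fin (T + 1) → F) //
        ∀ hi : i ∉ C, p.1 = a ⟨i, hi⟩} = cW := by
      intro i hi
      have hi' : i ∉ C := Finset.mem_compl.mp hi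
      have he : ∀ p : (Fin (U - T - 1) → F) × (Fin (T + 1) → F),
          (∀ hi0 : i ∉ C, p.1 = a ⟨i, hi0⟩) ↔ (p.1 = a ⟨i, hi'⟩ ∧ True) := by
        intro p
        exact ⟨fun H => ⟨H hi', trivial⟩, fun H _ => H.1⟩
      rw [Nat.card_congr (Equiv.subtypeEquivRight he), card_fst_fixed _ (fun _ _ => True),
        Nat.card_congr (Equiv.subtypeUnivEquiv (fun _ => trivial))]
    rw [Finset.prod_congr rfl h1, Finset.prod_congr rfl h2, Finset.prod_const,
      Finset.prod_const, Finset.card_compl, Fintype.card_fin]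
  -- cardinality of EB
  have hcardB : Nat.card ↥EB = t ^ c * (cV * t) ^ (K - c) := by
    have h0 : Nat.card ↥EB = ∏ i : Fin K,
        Nat.card {p : (Fin (U - T - 1) → F) × (Fin (T + 1) → F) //
          (∀ hi : i ∈ C, p.1 = (b ⟨i, hi⟩).1) ∧
            ∀ k : {k : Fin K // k ∈ C}, share h α p.1 p.2 k.1 = (b k).2 i} :=
      card_cond (fun i n s => (∀ hi : i ∈ C, n = (b ⟨i, hi⟩).1) ∧
        ∀ k : {k : Fin K // k ∈ C}, share h α n s k.1 = (b k).2 i)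
    rw [h0, ← Finset.prod_mul_prod_compl C]
    have h1 : ∀ i ∈ C, Nat.card {p : (Fin (U - T - 1) → F) × (Fin (T + 1) → F) //
        (∀ hi : i ∈ C, p.1 = (b ⟨i, hi⟩).1) ∧
          ∀ k : {k : Fin K // k ∈ C}, share h α p.1 p.2 k.1 = (b k).2 i} = t := by
      intro i hi
      have he : ∀ p : (Fin (U - T - 1) → F) × (Fin (T + 1) → F),
          ((∀ hi0 : i ∈ C, p.1 = (b ⟨i, hi0⟩).1) ∧
            ∀ k : {k : Fin K // k ∈ C}, share h α p.1 p.2 k.1 = (b k).2 i) ↔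
          (p.1 = (b ⟨i, hi⟩).1 ∧
            ∀ k : {k : Fin K // k ∈ C}, share h α p.1 p.2 k.1 = (b k).2 i) := by
        intro p
        exact ⟨fun H => ⟨H.1 hi, H.2⟩, fun H => ⟨fun _ => H.1, H.2⟩⟩
      rw [Nat.card_congr (Equiv.subtypeEquivRight he),
        card_fst_fixed _ (fun n s => ∀ k : {k : Fin K // k ∈ C},
          share h α n s k.1 = (b k).2 i), hfib]
    have h2 : ∀ i ∈ Cᶜ, Nat.card {p : (Fin (U - T - 1) → F) × (Fin (T + 1) → F) //
        (∀ hi : i ∈ C, p.1 = (b ⟨i, hi⟩).1) ∧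
          ∀ k : {k : Fin K // k ∈ C}, share h α p.1 p.2 k.1 = (b k).2 i} = cV * t := by
      intro i hi
      have hi' : i ∉ C := Finset.mem_compl.mp hi
      have he : ∀ p : (Fin (U - T - 1) → F) × (Fin (T + 1) → F),
          ((∀ hi0 : i ∈ C, p.1 = (b ⟨i, hi0⟩).1) ∧
            ∀ k : {k : Fin K // k ∈ C}, share h α p.1 p.2 k.1 = (b k).2 i) ↔
          (∀ k : {k : Fin K // k ∈ C}, share h α p.1 p.2 k.1 = (b k).2 i) := by
        intro p
        exact ⟨fun H => H.2, fun H => ⟨fun hi0 => absurd hi0 hi', H⟩⟩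
      rw [Nat.card_congr (Equiv.subtypeEquivRight he),
        card_snd_cond (fun n s => ∀ k : {k : Fin K // k ∈ C},
          share h α n s k.1 = (b k).2 i)]
      simp only [hfib]
      rw [Finset.sum_const, Finset.card_univ, smul_eq_mul, hcV, Nat.card_eq_fintype_card]
    rw [Finset.prod_congr rfl h1, Finset.prod_congr rfl h2, Finset.prod_const,
      Finset.prod_const, Finset.card_compl, Fintype.card_fin]
  -- cardinality of the intersection
  have hcardI : Nat.card ↥(EA ∩ EB) = t ^ c * t ^ (K - c) := by
    have hinter : EA ∩ EB = {x : (Fin K → (Fin (U - T - 1) → F)) × (Fin K → (Fin (T + 1) → F)) |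
        ∀ i : Fin K, ((∀ hi : i ∉ C, x.1 i = a ⟨i, hi⟩) ∧
          ((∀ hi : i ∈ C, x.1 i = (b ⟨i, hi⟩).1) ∧
            ∀ k : {k : Fin K // k ∈ C}, share h α (x.1 i) (x.2 i) k.1 = (b k).2 i))} := by
      ext x
      simp only [Set.mem_inter_iff, Set.mem_setOf_eq, hEA, hEB]
      exact ⟨fun H i => ⟨H.1 i, H.2 i⟩, fun H => ⟨fun i => (H i).1, fun i => (H i).2⟩⟩
    have h0 : Nat.card ↥(EA ∩ EB) = ∏ i : Fin K,
        Nat.card {p : (Fin (U - T - 1) → F) × (Fin (T + 1) → F) //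
          (∀ hi : i ∉ C, p.1 = a ⟨i, hi⟩) ∧
            ((∀ hi : i ∈ C, p.1 = (b ⟨i, hi⟩).1) ∧
              ∀ k : {k : Fin K // k ∈ C}, share h α p.1 p.2 k.1 = (b k).2 i)} := by
      rw [hinter]
      exact card_cond (fun (i : Fin K) (n : Fin (U - T - 1) → F) (s : Fin (T + 1) → F) =>
        (∀ hi : i ∉ C, n = a ⟨i, hi⟩) ∧
          ((∀ hi : i ∈ C, n = (b ⟨i, hi⟩).1) ∧
            ∀ k : {k : Fin K // k ∈ C}, share h α n s k.1 = (b k).2 i))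
    rw [h0, ← Finset.prod_mul_prod_compl C]
    have h1 : ∀ i ∈ C, Nat.card {p : (Fin (U - T - 1) → F) × (Fin (T + 1) → F) //
        (∀ hi : i ∉ C, p.1 = a ⟨i, hi⟩) ∧
          ((∀ hi : i ∈ C, p.1 = (b ⟨i, hi⟩).1) ∧
            ∀ k : {k : Fin K // k ∈ C}, share h α p.1 p.2 k.1 = (b k).2 i)} = t := by
      intro i hi
      have he : ∀ p : (Fin (U - T - 1) → F) × (Fin (T + 1) → F),
          ((∀ hi0 : i ∉ C, p.1 = a ⟨i, hi0⟩) ∧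
            ((∀ hi0 : i ∈ C, p.1 = (b ⟨i, hi0⟩).1) ∧
              ∀ k : {k : Fin K // k ∈ C}, share h α p.1 p.2 k.1 = (b k).2 i)) ↔
          (p.1 = (b ⟨i, hi⟩).1 ∧
            ∀ k : {k : Fin K // k ∈ C}, share h α p.1 p.2 k.1 = (b k).2 i) := by
        intro p
        exact ⟨fun H => ⟨H.2.1 hi, H.2.2⟩,
          fun H => ⟨fun hi0 => absurd hi hi0, fun _ => H.1, H.2⟩⟩
      rw [Nat.card_congr (Equiv.subtypeEquivRight he),
        card_fst_fixed _ (fun n s => ∀ k : {k : Fin K // k ∈ C},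
          share h α n s k.1 = (b k).2 i), hfib]
    have h2 : ∀ i ∈ Cᶜ, Nat.card {p : (Fin (U - T - 1) → F) × (Fin (T + 1) → F) //
        (∀ hi : i ∉ C, p.1 = a ⟨i, hi⟩) ∧
          ((∀ hi : i ∈ C, p.1 = (b ⟨i, hi⟩).1) ∧
            ∀ k : {k : Fin K // k ∈ C}, share h α p.1 p.2 k.1 = (b k).2 i)} = t := by
      intro i hi
      have hi' : i ∉ C := Finset.mem_compl.mp hi
      have he : ∀ p : (Fin (U - T - 1) → F) × (Fin (T + 1) → F),
          ((∀ hi0 : i ∉ C, p.1 = a ⟨i, hi0⟩) ∧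
            ((∀ hi0 : i ∈ C, p.1 = (b ⟨i, hi0⟩).1) ∧
              ∀ k : {k : Fin K // k ∈ C}, share h α p.1 p.2 k.1 = (b k).2 i)) ↔
          (p.1 = a ⟨i, hi'⟩ ∧
            ∀ k : {k : Fin K // k ∈ C}, share h α p.1 p.2 k.1 = (b k).2 i) := by
        intro p
        exact ⟨fun H => ⟨H.1 hi', H.2.2⟩,
          fun H => ⟨fun _ => H.1, fun hi0 => absurd hi0 hi', H.2⟩⟩
      rw [Nat.card_congr (Equiv.subtypeEquivRight he),
        card_fst_fixed _ (fun n s => ∀ k : {k : Fin K // k ∈ C},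
          share h α n s k.1 = (b k).2 i), hfib]
    rw [Finset.prod_congr rfl h1, Finset.prod_congr rfl h2, Finset.prod_const,
      Finset.prod_const, Finset.card_compl, Fintype.card_fin]
  -- total cardinality
  have hcardX : Fintype.card ((Fin K → (Fin (U - T - 1) → F)) × (Fin K → (Fin (T + 1) → F)))
      = cV ^ K * cW ^ K := by
    simp [hcV, hcW, Nat.card_eq_fintype_card]
  -- the key natural-number identity
  have hnat : (Nat.card ↥(EA ∩ EB)) *
      Fintype.card ((Fin K → (Fin (U - T - 1) → F)) × (Fin K → (Fin (T + 1) → F)))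
      = Nat.card ↥EA * Nat.card ↥EB := by
    rw [hcardA, hcardB, hcardI, hcardX]
    have hpow : ∀ m : ℕ, m ^ K = m ^ c * m ^ (K - c) := by
      intro m; rw [← pow_add, Nat.add_sub_cancel' hcK]
    rw [hpow cV, hpow cW]
    ring
  -- finish in ℝ≥0∞
  set M : ℝ≥0∞ :=
    (Fintype.card ((Fin K → (Fin (U - T - 1) → F)) × (Fin K → (Fin (T + 1) → F))) : ℝ≥0∞)
    with hM
  have hMne : M ≠ 0 := by
    rw [hM]
    simp only [ne_eq, Nat.cast_eq_zero]
    exact Fintype.card_ne_zero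
  have hMtop : M ≠ ⊤ := by rw [hM]; exact ENNReal.natCast_ne_top _
  calc (Nat.card ↥(EA ∩ EB) : ℝ≥0∞) * M⁻¹
      = (Nat.card ↥(EA ∩ EB) : ℝ≥0∞) * (M * M⁻¹) * M⁻¹ := by
        rw [ENNReal.mul_inv_cancel hMne hMtop, mul_one]
    _ = ((Nat.card ↥(EA ∩ EB) : ℝ≥0∞) * M) * (M⁻¹ * M⁻¹) := by ring
    _ = ((Nat.card ↥EA : ℝ≥0∞) * (Nat.card ↥EB : ℝ≥0∞)) * (M⁻¹ * M⁻¹) := by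
        congr 1
        rw [hM]
        exact_mod_cast hnat
    _ = (Nat.card ↥EA : ℝ≥0∞) * M⁻¹ * ((Nat.card ↥EB : ℝ≥0∞) * M⁻¹) := by ring
end

section
/- ((T+1)-privacy property, equation (10) of the paper.) In the key-construction setup, suppose α ∈ F^{U×K} is a (T+1)-private MDS matrix. Then for every subset C ⊆ {1,…,K} with |C| ≤ T+1, the random tuple ([Q_i]_k)_{i∈{1,…,K}, k∈C} of all shares indexed by C is independent of the random tuple (N₁,…,N_K). -/
/-!
The share tuple is `Λ(N) + L(S)`, where `Λ` collects the contributions of the noise and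
`L(s)_{i,k} = s_i ⋅ β_k` with `β_k` the last `T + 1` entries of column `k` of `α`. Extending
`C` to `T + 1` columns, the private MDS minor on them is invertible, so `L` is surjective.
As `(N, S)` is uniform, for every value `n` of `N` the number of `s` with `Λ(n) + L(s) = y`
is the size of `ker L`, independent of `n`: `L(S)` acts as a one-time pad and hides `N`.
-/

open MeasureTheory Finset
open scoped ENNReal

section Uniform

variable {Ω X : Type*} [MeasurableSpace Ω] [Fintype X] {P : Measure Ω} {W : Ω → X}

lemma UniformRV.measure_preimage_le (hW : UniformRV P W) (E : Set X) :
    P (W ⁻¹' E) ≤ Nat.card E / Fintype.card X := by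
  classical
  calc P (W ⁻¹' E) = P (⋃ x ∈ E.toFinset, W ⁻¹' {x}) := by simp
    _ ≤ ∑ x ∈ E.toFinset, P (W ⁻¹' {x}) := measure_biUnion_finset_le _ _
    _ = Nat.card E / Fintype.card X := by
      rw [Finset.sum_congr rfl fun x _ => hW x, sum_const, nsmul_eq_mul,
        Nat.card_eq_card_toFinset, div_eq_mul_inv]

/-- The preimages need not be measurable, so instead of additivity we squeeze between the
subadditivity bounds for `E` and `Eᶜ`. -/
lemma UniformRV.measure_preimage [IsProbabilityMeasure P] (hW : UniformRV P W) (E : Set X) :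
    P (W ⁻¹' E) = Nat.card E / Fintype.card X := by
  have hX : (Fintype.card X : ℝ≥0∞) ≠ 0 := by
    have : Nonempty X := (nonempty_of_isProbabilityMeasure P).map W
    exact_mod_cast Fintype.card_ne_zero
  have hsum : (Nat.card E / Fintype.card X : ℝ≥0∞) + Nat.card ↥Eᶜ / Fintype.card X = 1 := by
    rw [ENNReal.div_add_div_same, ← Nat.cast_add, Nat.card_coe_set_eq,
      Nat.card_coe_set_eq, Set.ncard_add_ncard_compl, Nat.card_eq_fintype_card,
      ENNReal.div_self hX (by simp)]
  have hcover : 1 ≤ P (W ⁻¹' E) + P (W ⁻¹' Eᶜ) := calc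
    1 = P (W ⁻¹' E ∪ W ⁻¹' Eᶜ) := by
      rw [← Set.preimage_union, Set.union_compl_self, Set.preimage_univ, measure_univ]
    _ ≤ _ := measure_union_le _ _
  refine le_antisymm (hW.measure_preimage_le E) (ENNReal.le_of_add_le_add_right
    (ENNReal.div_ne_top (ENNReal.natCast_ne_top (Nat.card ↥Eᶜ)) hX) ?_)
  calc _ = (1 : ℝ≥0∞) := hsum
    _ ≤ _ := hcover
    _ ≤ _ := by gcongr; exact hW.measure_preimage_le Eᶜ

end Uniform

lemma uniformRV_pi_prod_of_indep {Ω ι A B : Type*} [MeasurableSpace Ω] [Fintype ι]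
    [DecidableEq ι] [Fintype A] [Fintype B] {P : Measure Ω}
    (N : ι → Ω → A) (S : ι → Ω → B)
    (hindep : ∀ (a : ι → A) (b : ι → B),
      P ((⋂ i, N i ⁻¹' {a i}) ∩ ⋂ i, S i ⁻¹' {b i}) =
        (∏ i, P (N i ⁻¹' {a i})) * ∏ i, P (S i ⁻¹' {b i}))
    (hN : ∀ i, UniformRV P (N i)) (hS : ∀ i, UniformRV P (S i)) :
    UniformRV P (fun ω => ((fun i => N i ω), (fun i => S i ω))) := by
  rintro ⟨a, b⟩
  have hpre : (fun ω => ((fun i => N i ω), (fun i => S i ω))) ⁻¹' {(a, b)} =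
      (⋂ i, N i ⁻¹' {a i}) ∩ ⋂ i, S i ⁻¹' {b i} := by
    ext ω
    simp [Prod.ext_iff, funext_iff]
  rw [hpre, hindep, Finset.prod_congr rfl fun i _ => hN i (a i),
    Finset.prod_congr rfl fun i _ => hS i (b i)]
  simp [Fintype.card_prod, ENNReal.inv_pow, ENNReal.mul_inv]

section Fibers

variable {Ω A B Y : Type*} [MeasurableSpace Ω] [Fintype A] [Fintype B] {P : Measure Ω}
  [IsProbabilityMeasure P] {W : Ω → A × B}

lemma UniformRV.indepRV_of_card_fiber (hW : UniformRV P W) (φ : A × B → Y)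
    (hφ : ∀ y a a', Nat.card {b // φ (a, b) = y} = Nat.card {b // φ (a', b) = y}) :
    IndepRV P (fun ω => φ (W ω)) (fun ω => (W ω).1) := by
  intro y a
  set c := Nat.card {b // φ (a, b) = y}
  have h_inter : Nat.card ↥({x | φ x = y} ∩ {x | x.1 = a}) = c :=
    Nat.card_congr
      { toFun := fun x => ⟨x.1.2, by obtain ⟨⟨a', b⟩, hy, rfl : a' = a⟩ := x; exact hy⟩
        invFun := fun b => ⟨(a, b.1), b.2, rfl⟩
        left_inv := fun ⟨⟨a', b⟩, hy, ha⟩ => by subst ha; rfl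
        right_inv := fun _ => rfl }
  have h_fiber : Nat.card {x : A × B | φ x = y} = Fintype.card A * c := by
    rw [show Nat.card {x : A × B | φ x = y} = Nat.card (Σ a', {b // φ (a', b) = y}) from
        Nat.card_congr (Equiv.subtypeProdEquivSigmaSubtype fun a b => φ (a, b) = y),
      Nat.card_sigma, Finset.sum_congr rfl fun a' _ => hφ y a' a, sum_const, smul_eq_mul,
      card_univ]
  have h_slice : Nat.card {x : A × B | x.1 = a} = Fintype.card B :=
    (Nat.card_congr
      { toFun := fun x => x.1.2
        invFun := fun b => ⟨(a, b), rfl⟩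
        left_inv := fun ⟨⟨a', b⟩, ha⟩ => by subst ha; rfl
        right_inv := fun _ => rfl }).trans (Nat.card_eq_fintype_card)
  have hAB : (Fintype.card (A × B) : ℝ≥0∞) ≠ 0 := by
    have : Nonempty (A × B) := (nonempty_of_isProbabilityMeasure P).map W
    exact_mod_cast Fintype.card_ne_zero
  change P (W ⁻¹' ({x | φ x = y} ∩ {x | x.1 = a})) =
    P (W ⁻¹' {x | φ x = y}) * P (W ⁻¹' {x | x.1 = a})
  rw [hW.measure_preimage, hW.measure_preimage, hW.measure_preimage, h_inter, h_fiber,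
    h_slice]
  have hcard : (Fintype.card A : ℝ≥0∞) * Fintype.card B = Fintype.card (A × B) := by
    rw [Fintype.card_prod, Nat.cast_mul]
  simp only [div_eq_mul_inv]
  calc (c : ℝ≥0∞) * (Fintype.card (A × B) : ℝ≥0∞)⁻¹
      = c * (Fintype.card (A × B) : ℝ≥0∞)⁻¹ *
          (Fintype.card (A × B) * (Fintype.card (A × B) : ℝ≥0∞)⁻¹) := by
        rw [ENNReal.mul_inv_cancel hAB (ENNReal.natCast_ne_top _), mul_one]
    _ = Fintype.card A * Fintype.card B * c * (Fintype.card (A × B) : ℝ≥0∞)⁻¹ *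
          (Fintype.card (A × B) : ℝ≥0∞)⁻¹ := by rw [hcard]; ring
    _ = _ := by push_cast; ring

end Fibers

lemma AddMonoidHom.card_add_fiber_eq {B Y : Type*} [AddGroup B] [AddCommGroup Y] {L : B →+ Y}
    (hL : Function.Surjective L) (g g' y : Y) :
    Nat.card {b // g + L b = y} = Nat.card {b // g' + L b = y} := by
  have fiber (g : Y) : {b // g + L b = y} ≃ L ⁻¹' {y - g} :=
    Equiv.subtypeEquivRight fun b => by simp [eq_sub_iff_add_eq']
  exact Nat.card_congr
    ((fiber g).trans ((L.fiberEquivOfSurjective hL _ _).trans (fiber g').symm))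

lemma UniformRV.indepRV_add_of_surjective {Ω A B Y : Type*} [MeasurableSpace Ω] [Fintype A]
    [AddGroup B] [Fintype B] [AddCommGroup Y] {P : Measure Ω} [IsProbabilityMeasure P]
    {W : Ω → A × B} (hW : UniformRV P W) (Λ : A → Y) {L : B →+ Y}
    (hL : Function.Surjective L) :
    IndepRV P (fun ω => Λ (W ω).1 + L (W ω).2) (fun ω => (W ω).1) :=
  hW.indepRV_of_card_fiber (fun x => Λ x.1 + L x.2) fun y a a' =>
    L.card_add_fiber_eq hL (Λ a) (Λ a') y

namespace Matrix

variable {m n R : Type*} [Fintype m] [DecidableEq m] [CommRing R]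

def vecMulRowsOn (M : Matrix m n R) (ι : Type*) (C : Finset n) :
    (ι → m → R) →+ (ι × C → R) where
  toFun s p := (s p.1 ᵥ* M) p.2
  map_zero' := by ext; simp
  map_add' s s' := by ext; simp [add_vecMul]

lemma exists_vecMul_eq_on_of_isUnit_det {M : Matrix m n R} {c : m → n}
    (hc : IsUnit (M.submatrix id c).det) {C : Finset n} (hC : ↑C ⊆ Set.range c)
    (t : C → R) : ∃ s, ∀ k : C, (s ᵥ* M) k = t k := by
  classical
  obtain ⟨s, hs⟩ := (vecMul_surjective_iff_isUnit.2 ((isUnit_iff_isUnit_det _).2 hc))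
    fun j => if h : c j ∈ C then t ⟨c j, h⟩ else 0
  refine ⟨s, fun ⟨k, hk⟩ => ?_⟩
  obtain ⟨j, rfl⟩ := hC hk
  exact (congrFun hs j).trans (dif_pos hk)

lemma vecMulRowsOn_surjective {ι : Type*} {M : Matrix m n R} {c : m → n}
    (hc : IsUnit (M.submatrix id c).det) {C : Finset n} (hC : ↑C ⊆ Set.range c) :
    Function.Surjective (M.vecMulRowsOn ι C) := fun t => by
  choose s hs using fun i => exists_vecMul_eq_on_of_isUnit_det hc hC fun k => t (i, k)
  exact ⟨s, funext fun p => hs p.1 p.2⟩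

end Matrix

lemma Finset.exists_injective_fin_subset_range {α : Type*} [Fintype α] {C : Finset α} {n : ℕ}
    (hC : #C ≤ n) (hn : n ≤ Fintype.card α) :
    ∃ c : Fin n → α, Function.Injective c ∧ ↑C ⊆ Set.range c := by
  obtain ⟨D, hCD, -, hD⟩ := Finset.exists_subsuperset_card_eq C.subset_univ hC (by simpa)
  obtain ⟨e⟩ : Nonempty (Fin n ≃ D) := ⟨(Fintype.equivFinOfCardEq (by simpa using hD)).symm⟩
  exact ⟨fun j => e j, Subtype.val_injective.comp e.injective,
    fun x hx => ⟨e.symm ⟨x, hCD hx⟩, by simp⟩⟩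

section Shares

open scoped Matrix

variable {F : Type*} [Field F] {U K T : ℕ}

def bottomRows (hTU : T + 1 ≤ U) (α : Matrix (Fin U) (Fin K) F) :
    Matrix (Fin (T + 1)) (Fin K) F :=
  Matrix.of fun i k => α ⟨U - (T + 1) + i, by omega⟩ k

lemma share_eq_add (hTU : T + 1 ≤ U) (α : Matrix (Fin U) (Fin K) F)
    (n : Fin (U - T - 1) → F) (s : Fin (T + 1) → F) (k : Fin K) :
    share (by omega) α n s k = share (by omega) α n 0 k + (s ᵥ* bottomRows hTU α) k := by
  have h : U - T - 1 + (T + 1) = U := by omega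
  have split (s : Fin (T + 1) → F) : share h α n s k =
      ∑ j, n j * α (Fin.cast h (Fin.castAdd _ j)) k + (s ᵥ* bottomRows hTU α) k := by
    rw [share, ← (finCongr h).sum_comp, Fin.sum_univ_add]
    congr 1
    · simp [finCongr]
    · refine Finset.sum_congr rfl fun j _ => ?_
      simp only [finCongr_apply, Fin.cast_cast, Fin.cast_eq_self, Fin.append_right]
      -- `U - T - 1` and `U - (T + 1)` agree definitionally
      congr 2
  rw [split, split, Matrix.zero_vecMul, Pi.zero_apply, add_zero]

lemma bottomRows_vecMulRowsOn_surjective {hTU : T + 1 ≤ U} {α : Matrix (Fin U) (Fin K) F}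
    (hα : IsPrivateMDS T hTU α) (hUK : U ≤ K) (ι : Type*) {C : Finset (Fin K)}
    (hC : #C ≤ T + 1) : Function.Surjective ((bottomRows hTU α).vecMulRowsOn ι C) := by
  obtain ⟨c, hc, hCc⟩ := C.exists_injective_fin_subset_range hC (by simpa using hTU.trans hUK)
  exact Matrix.vecMulRowsOn_surjective (M := bottomRows hTU α)
    (isUnit_iff_ne_zero.2 (hα.2 c hc)) hCc

end Shares

/-- **`(T+1)`-privacy property (equation (10) of the paper).**
In the key-construction setup with a `(T+1)`-private MDS matrix `α`, for every subset
`C ⊆ {1, …, K}` with `|C| ≤ T + 1`, the tuple of shares `([Q_i]_k)_{i ∈ [K], k ∈ C}` is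
independent of the tuple `(N₁, …, N_K)`. -/
theorem key_construction_privacy
    (F : Type) [Field F] [Fintype F] (K U T : ℕ)
    (hTU : T + 1 ≤ U) (hUK : U ≤ K)
    (Ω : Type) [MeasurableSpace Ω] (P : Measure Ω) [IsProbabilityMeasure P]
    (N : Fin K → Ω → (Fin (U - T - 1) → F))
    (S : Fin K → Ω → (Fin (T + 1) → F))
    (hindep : ∀ (a : Fin K → (Fin (U - T - 1) → F)) (b : Fin K → (Fin (T + 1) → F)),
      P ((⋂ i, N i ⁻¹' {a i}) ∩ ⋂ i, S i ⁻¹' {b i}) =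
        (∏ i, P (N i ⁻¹' {a i})) * ∏ i, P (S i ⁻¹' {b i}))
    (hunifN : ∀ i, UniformRV P (N i))
    (hunifS : ∀ i, UniformRV P (S i))
    (α : Matrix (Fin U) (Fin K) F)
    (hα : IsPrivateMDS T hTU α)
    (C : Finset (Fin K)) (hC : C.card ≤ T + 1) :
    IndepRV P
      (fun ω => fun p : Fin K × {k : Fin K // k ∈ C} =>
        share (by omega) α (N p.1 ω) (S p.1 ω) p.2.1)
      (fun ω => fun i : Fin K => N i ω) := by
  have hW := uniformRV_pi_prod_of_indep N S hindep hunifN hunifS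
  have hpad := hW.indepRV_add_of_surjective
    (fun n p => share (by omega) α (n p.1) 0 p.2.1)
    (bottomRows_vecMulRowsOn_surjective hα hUK (Fin K) hC)
  convert hpad using 3 with ω p
  exact share_eq_add hTU α _ _ _
end

section
/- Let F be a finite field with q elements and let T+1 ≤ U ≤ K be natural numbers with q > K. Then there exists a (T+1)-private MDS matrix α ∈ F^{U×K}, i.e., a matrix such that every U×U submatrix formed by U of its columns is invertible, and every (T+1)×(T+1) submatrix formed by T+1 columns of its last T+1 rows is invertible. -/
open Finset

/-- **Existence of `(T+1)`-private MDS matrices.**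
Over a finite field `F` with `q > K` elements and `T + 1 ≤ U ≤ K`, there exists a
`(T+1)`-private MDS matrix `α ∈ F^{U×K}`. -/
theorem exists_private_mds
    (F : Type) [Field F] [Fintype F] (q K U T : ℕ)
    (hq : Fintype.card F = q) (hTU : T + 1 ≤ U) (hUK : U ≤ K) (hqK : q > K) :
    ∃ α : Matrix (Fin U) (Fin K) F, IsPrivateMDS T hTU α := by
  classical
  have hcard : Fintype.card (Fin K) ≤ Fintype.card {x : F // x ≠ 0} := by
    have : Fintype.card {x : F // x ≠ 0} = q - 1 := by
      rw [Fintype.card_subtype_compl, Fintype.card_subtype_eq, hq]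
    simp [this]; omega
  obtain ⟨e⟩ := Function.Embedding.nonempty_of_card_le hcard
  set v : Fin K → F := fun j => ((e j : {x : F // x ≠ 0}) : F) with hv
  have hvne : ∀ j, v j ≠ 0 := fun j => (e j).2
  have hvinj : Function.Injective v := fun a b h => e.injective (Subtype.ext h)
  have key : ∀ (n : ℕ) (c : Fin n → Fin K), Function.Injective c →
      (Matrix.of fun i j : Fin n => v (c j) ^ (i : ℕ)).det ≠ 0 := by
    intro n c hc
    have : (Matrix.of fun i j : Fin n => v (c j) ^ (i : ℕ)) =
        (Matrix.vandermonde (fun j => v (c j))).transpose := by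
      ext i j; simp [Matrix.vandermonde]
    rw [this, Matrix.det_transpose, Matrix.det_vandermonde]
    apply Finset.prod_ne_zero_iff.2
    intro i _
    apply Finset.prod_ne_zero_iff.2
    intro j hj
    exact sub_ne_zero.2 fun h => absurd (hc (hvinj h)).symm (ne_of_lt (Finset.mem_Ioi.mp hj))
  have key2 : ∀ (n s : ℕ) (c : Fin n → Fin K), Function.Injective c →
      (Matrix.of fun i j : Fin n => v (c j) ^ (s + (i : ℕ))).det ≠ 0 := by
    intro n s c hc
    have h2 : (Matrix.of fun i j : Fin n => v (c j) ^ (s + (i : ℕ))) =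
        Matrix.of fun i j : Fin n =>
          v (c j) ^ s * (Matrix.of fun i j : Fin n => v (c j) ^ (i : ℕ)) i j := by
      ext i j; simp [pow_add]
    rw [h2, Matrix.det_mul_row]
    exact mul_ne_zero (Finset.prod_ne_zero_iff.2 fun j _ => pow_ne_zero _ (hvne _)) (key n c hc)
  refine ⟨Matrix.of fun i j => v j ^ (i : ℕ), fun c hc => key U c hc, fun c hc => ?_⟩
  show (Matrix.of fun i j : Fin (T + 1) => v (c j) ^ (U - (T + 1) + (i : ℕ))).det ≠ 0
  exact key2 (T + 1) (U - (T + 1)) c hc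
end

section
/- (Correctness of the general DSA scheme.) Let F be a field, T+1 ≤ U ≤ K, and let α ∈ F^{U×K} be an MDS matrix with columns α_k. Fix subsets S ⊆ 𝒰₁ ⊆ {1,…,K} with |S| = U. For arbitrary vectors W_k, N_k ∈ F^{U−T−1} and S_k ∈ F^{T+1} (k ∈ {1,…,K}), define the first-round messages X_k = W_k + N_k and the second-round messages Y_k = ∑_{i∈𝒰₁} (N_i, S_i) · α_k ∈ F, where (N_i, S_i) ∈ F^U denotes concatenation. Let μ ∈ F^U be the unique row vector satisfying μ · α_k = Y_k for all k ∈ S (which exists and is unique by the MDS property), and let π : F^U → F^{U−T−1} be projection onto the first U−T−1 coordinates. Then ∑_{k∈𝒰₁} X_k − π(μ) = ∑_{k∈𝒰₁} W_k. In particular, the desired aggregate ∑_{k∈𝒰₁} W_k is a function of ((X_k)_{k∈𝒰₁}, (Y_k)_{k∈S}) alone. -/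
open Finset

/-- **Correctness of the general DSA scheme.**
Let `α ∈ F^{U×K}` be MDS, `S ⊆ 𝒰₁` with `|S| = U`. Set `X_k = W_k + N_k` and
`Y_k = ∑_{i ∈ 𝒰₁} (N_i, S_i) · α_k`. Then there is a unique row vector `μ ∈ F^U` with
`μ · α_k = Y_k` for all `k ∈ S`, and for any such `μ`, subtracting the first
`U - T - 1` coordinates of `μ` from `∑_{k ∈ 𝒰₁} X_k` recovers the desired aggregate
`∑_{k ∈ 𝒰₁} W_k`; in particular the aggregate is a function of
`((X_k)_{k ∈ 𝒰₁}, (Y_k)_{k ∈ S})` alone. -/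
theorem dsa_scheme_correctness
    (F : Type) [Field F] (K U T : ℕ) (hTU : T + 1 ≤ U) (hUK : U ≤ K)
    (α : Matrix (Fin U) (Fin K) F) (hα : IsMDS α)
    (U1 S : Finset (Fin K)) (hSU1 : S ⊆ U1) (hS : S.card = U)
    (W N : Fin K → (Fin (U - T - 1) → F)) (Sv : Fin K → (Fin (T + 1) → F))
    (X : Fin K → (Fin (U - T - 1) → F)) (hX : ∀ k, X k = W k + N k)
    (Y : Fin K → F)
    (hY : ∀ k, Y k = ∑ i ∈ U1, share (by omega) α (N i) (Sv i) k) :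
    (∃! μ : Fin U → F, ∀ k ∈ S, ∑ i : Fin U, μ i * α i k = Y k) ∧
      ∀ μ : Fin U → F, (∀ k ∈ S, ∑ i : Fin U, μ i * α i k = Y k) →
        ((∑ k ∈ U1, X k) -
            fun j : Fin (U - T - 1) => μ ⟨j.1, by have := j.isLt; omega⟩)
          = ∑ k ∈ U1, W k := by
  have h : U - T - 1 + (T + 1) = U := by omega
  -- the canonical solution
  set μ₀ : Fin U → F := fun j => ∑ i ∈ U1, Fin.append (N i) (Sv i) (Fin.cast h.symm j)
    with hμ₀def
  have hμ₀ : ∀ k, ∑ i : Fin U, μ₀ i * α i k = Y k := by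
    intro k
    rw [hY]
    simp only [hμ₀def, share, Finset.sum_mul]
    rw [Finset.sum_comm]
  -- the submatrix indexed by S
  let c : Fin U → Fin K := fun j => (S.orderIsoOfFin hS j : Fin K)
  have hc : Function.Injective c := fun a b hab =>
    (S.orderIsoOfFin hS).injective (Subtype.ext hab)
  have hcS : ∀ j, c j ∈ S := fun j => (S.orderIsoOfFin hS j).2
  let A : Matrix (Fin U) (Fin U) F := Matrix.of fun i j => α i (c j)
  have hdet : IsUnit A.det := isUnit_iff_ne_zero.mpr (hα c hc)
  have hcancel : ∀ μ μ' : Fin U → F,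
      (∀ k ∈ S, ∑ i : Fin U, μ i * α i k = Y k) →
      (∀ k ∈ S, ∑ i : Fin U, μ' i * α i k = Y k) → μ = μ' := by
    intro μ μ' hμ hμ'
    have hv : Matrix.vecMul μ A = Matrix.vecMul μ' A := by
      funext j
      have h1 := hμ (c j) (hcS j)
      have h2 := hμ' (c j) (hcS j)
      simp only [Matrix.vecMul, dotProduct, A, Matrix.of_apply]
      rw [h1, h2]
    have := congrArg (fun v => Matrix.vecMul v A⁻¹) hv
    simpa only [Matrix.vecMul_vecMul, Matrix.mul_nonsing_inv A hdet,
      Matrix.vecMul_one] using this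
  refine ⟨⟨μ₀, fun k _ => hμ₀ k, fun μ hμ => hcancel μ μ₀ hμ (fun k _ => hμ₀ k)⟩, ?_⟩
  intro μ hμ
  have hμeq : μ = μ₀ := hcancel μ μ₀ hμ (fun k _ => hμ₀ k)
  funext j
  have hcast : (Fin.cast h.symm ⟨j.1, by have := j.isLt; omega⟩ :
      Fin (U - T - 1 + (T + 1))) = Fin.castAdd (T + 1) j := by
    apply Fin.ext; rfl
  simp only [Pi.sub_apply, Finset.sum_apply, hX, Pi.add_apply, hμeq, hμ₀def,
    hcast, Fin.append_left, Finset.sum_add_distrib]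
  ring
end
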